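/- arXiv:1402.5402 — 7 statements merged into one kernel-verified Lean document; each statement's English description precedes it below -/
import Mathlib

section
/- Let H be an r-uniform hypergraph admitting a weighted incidence matrix B with B(v,e) ≥ 0, B(v,e)=0 when v∉e, such that ∑_{e: v∈e} B(v,e) ≤ 1 for every vertex v, and ∏_{v∈e} B(v,e) ≥ α > 0 for every edge e. Then ρ(H) ≤ (r−1)!·α^{−1/r}. -/
/-!
Per edge, weighted AM-GM applied to the numbers `B v e * x v ^ r` gives
`r * ∏_{v ∈ e} x v ≤ α^(-1/r) * ∑_{v ∈ e} B v e * x v ^ r`. Summing over the edges and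
exchanging the order of summation, the column sums `∑_{e ∋ v} B v e ≤ 1` leave at most
`α^(-1/r) * ∑_v x v ^ r`, and `r! = r * (r - 1)!` converts this into the bound on the
Rayleigh-type quotient defining `ρ(H)`.
-/

open Finset

/-- Spectral radius of an `r`-uniform hypergraph with edge set `E`. -/
noncomputable def specRad (r : ℕ) {V : Type} [Fintype V] (E : Finset (Finset V)) : ℝ :=
  sSup {ρ : ℝ | ∃ x : V → ℝ, (∀ v, 0 ≤ x v) ∧ x ≠ 0 ∧
    ρ = (Nat.factorial r : ℝ) * (∑ e ∈ E, ∏ v ∈ e, x v) / (∑ v, x v ^ r)}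

theorem rpow_prod_mul_prod_le_sum_div_card {ι : Type*} (s : Finset ι) (hs : s.Nonempty)
    {w x : ι → ℝ} (hw : ∀ i ∈ s, 0 ≤ w i) (hx : ∀ i ∈ s, 0 ≤ x i) :
    (∏ i ∈ s, w i) ^ (#s : ℝ)⁻¹ * ∏ i ∈ s, x i ≤ (∑ i ∈ s, w i * x i ^ #s) / #s := by
  have hk : (#s : ℝ) ≠ 0 := by exact_mod_cast hs.card_pos.ne'
  have hroot : ∀ i ∈ s, (w i * x i ^ #s) ^ (#s : ℝ)⁻¹ = w i ^ (#s : ℝ)⁻¹ * x i := fun i hi => by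
    rw [Real.mul_rpow (hw i hi) (pow_nonneg (hx i hi) _),
      Real.pow_rpow_inv_natCast (hx i hi) hs.card_pos.ne']
  calc (∏ i ∈ s, w i) ^ (#s : ℝ)⁻¹ * ∏ i ∈ s, x i
      = ∏ i ∈ s, (w i * x i ^ #s) ^ (#s : ℝ)⁻¹ := by
        rw [← Real.finsetProd_rpow s w hw, ← prod_mul_distrib, prod_congr rfl hroot]
    _ ≤ ∑ i ∈ s, (#s : ℝ)⁻¹ * (w i * x i ^ #s) :=
        Real.geom_mean_le_arith_mean_weighted s _ _ (fun _ _ => by positivity)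
          (by rw [sum_const, nsmul_eq_mul, mul_inv_cancel₀ hk])
          (fun i hi => mul_nonneg (hw i hi) (pow_nonneg (hx i hi) _))
    _ = (∑ i ∈ s, w i * x i ^ #s) / #s := by rw [← mul_sum, inv_mul_eq_div]

theorem specRad_le_of_forall_le (r : ℕ) {V : Type} [Fintype V] (E : Finset (Finset V)) {C : ℝ}
    (hC : 0 ≤ C)
    (h : ∀ x : V → ℝ, (∀ v, 0 ≤ x v) →
      (r.factorial : ℝ) * ∑ e ∈ E, ∏ v ∈ e, x v ≤ C * ∑ v, x v ^ r) :
    specRad r E ≤ C := by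
  refine Real.sSup_le ?_ hC
  rintro ρ ⟨x, hx, hx_ne, rfl⟩
  obtain ⟨v, hv⟩ := Function.ne_iff.mp hx_ne
  have hpos : 0 < ∑ v, x v ^ r :=
    sum_pos' (fun v _ => pow_nonneg (hx v) r)
      ⟨v, mem_univ v, pow_pos ((hx v).lt_of_ne' hv) r⟩
  rw [div_le_iff₀ hpos]
  exact h x hx

section Subnormal

variable {V : Type*} {r : ℕ} {B : V → Finset V → ℝ} {α : ℝ}

theorem card_mul_prod_le_of_le_prod (hr : 1 ≤ r) (hα : 0 < α) {e : Finset V} (he : #e = r)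
    (hBnn : ∀ v, 0 ≤ B v e) (hprod : α ≤ ∏ v ∈ e, B v e) {x : V → ℝ} (hx : ∀ v, 0 ≤ x v) :
    (r : ℝ) * ∏ v ∈ e, x v ≤ α ^ (-(1 : ℝ) / r) * ∑ v ∈ e, B v e * x v ^ r := by
  subst he
  have hne : e.Nonempty := card_pos.mp hr
  have hcard : (0 : ℝ) < #e := by exact_mod_cast hr
  have hroot : α ^ (#e : ℝ)⁻¹ * ∏ v ∈ e, x v ≤ (∑ v ∈ e, B v e * x v ^ #e) / #e :=
    calc α ^ (#e : ℝ)⁻¹ * ∏ v ∈ e, x v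
        ≤ (∏ v ∈ e, B v e) ^ (#e : ℝ)⁻¹ * ∏ v ∈ e, x v := by
          gcongr
          exact prod_nonneg fun v _ => hx v
      _ ≤ _ := rpow_prod_mul_prod_le_sum_div_card e hne (fun v _ => hBnn v) (fun v _ => hx v)
  have hinv : α ^ (-(1 : ℝ) / #e) * α ^ (#e : ℝ)⁻¹ = 1 := by
    rw [← Real.rpow_add hα, neg_div, one_div, neg_add_cancel, Real.rpow_zero]
  rw [le_div_iff₀ hcard] at hroot
  calc (#e : ℝ) * ∏ v ∈ e, x v
      = (α ^ (-(1 : ℝ) / #e) * α ^ (#e : ℝ)⁻¹) * (#e * ∏ v ∈ e, x v) := by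
        rw [hinv, one_mul]
    _ = α ^ (-(1 : ℝ) / #e) * ((α ^ (#e : ℝ)⁻¹ * ∏ v ∈ e, x v) * #e) := by ring
    _ ≤ α ^ (-(1 : ℝ) / #e) * ∑ v ∈ e, B v e * x v ^ #e := by gcongr

theorem card_mul_sum_prod_le_of_subnormal [Fintype V] [DecidableEq V] (hr : 1 ≤ r)
    {E : Finset (Finset V)} (hunif : ∀ e ∈ E, #e = r) (hBnn : ∀ v e, 0 ≤ B v e) (hα : 0 < α)
    (hsum : ∀ v, ∑ e ∈ E.filter (fun e => v ∈ e), B v e ≤ 1)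
    (hprod : ∀ e ∈ E, α ≤ ∏ v ∈ e, B v e) {x : V → ℝ} (hx : ∀ v, 0 ≤ x v) :
    (r : ℝ) * ∑ e ∈ E, ∏ v ∈ e, x v ≤ α ^ (-(1 : ℝ) / r) * ∑ v, x v ^ r := by
  have hswap : ∑ e ∈ E, ∑ v ∈ e, B v e * x v ^ r
      = ∑ v, (∑ e ∈ E.filter (fun e => v ∈ e), B v e) * x v ^ r := by
    simp_rw [sum_mul]
    exact sum_comm' (by simp [and_comm])
  calc (r : ℝ) * ∑ e ∈ E, ∏ v ∈ e, x v
      ≤ α ^ (-(1 : ℝ) / r) * ∑ e ∈ E, ∑ v ∈ e, B v e * x v ^ r := by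
        rw [mul_sum, mul_sum]
        exact sum_le_sum fun e he =>
          card_mul_prod_le_of_le_prod hr hα (hunif e he) (hBnn · e) (hprod e he) hx
    _ ≤ α ^ (-(1 : ℝ) / r) * ∑ v, x v ^ r := by
        rw [hswap]
        gcongr with v
        exact mul_le_of_le_one_left (pow_nonneg (hx v) r) (hsum v)

end Subnormal

theorem specRad_le_of_subnormal_general (r n : ℕ) (hr : 1 ≤ r)
    (E : Finset (Finset (Fin n))) (hunif : ∀ e ∈ E, e.card = r)
    (B : Fin n → Finset (Fin n) → ℝ)
    (hBnn : ∀ v e, 0 ≤ B v e)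
    (α : ℝ) (hα : 0 < α)
    (hsum : ∀ v, ∑ e ∈ E.filter (fun e => v ∈ e), B v e ≤ 1)
    (hprod : ∀ e ∈ E, α ≤ ∏ v ∈ e, B v e) :
    specRad r E ≤ (Nat.factorial (r - 1) : ℝ) * α ^ (-(1 : ℝ) / r) := by
  refine specRad_le_of_forall_le r E (by positivity) fun x hx => ?_
  have hfac : (r.factorial : ℝ) = (r - 1).factorial * r := by
    rw [mul_comm]; exact_mod_cast (Nat.mul_factorial_pred (by omega)).symm
  calc (r.factorial : ℝ) * ∑ e ∈ E, ∏ v ∈ e, x v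
      = (r - 1).factorial * (r * ∑ e ∈ E, ∏ v ∈ e, x v) := by rw [hfac, mul_assoc]
    _ ≤ (r - 1).factorial * (α ^ (-(1 : ℝ) / r) * ∑ v, x v ^ r) :=
        mul_le_mul_of_nonneg_left
          (card_mul_sum_prod_le_of_subnormal hr hunif hBnn hα hsum hprod hx) (by positivity)
    _ = _ := by rw [mul_assoc]

/-- an α-subnormal weighted incidence matrix bounds the spectral radius
by `(r-1)! * α^(-1/r)`. -/
theorem specRad_le_of_subnormal (r n : ℕ) (hr : 1 ≤ r)
    (E : Finset (Finset (Fin n))) (hunif : ∀ e ∈ E, e.card = r)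
    (B : Fin n → Finset (Fin n) → ℝ)
    (hBnn : ∀ v e, 0 ≤ B v e)
    (hBzero : ∀ v e, v ∉ e → B v e = 0)
    (α : ℝ) (hα : 0 < α)
    (hsum : ∀ v, ∑ e ∈ E.filter (fun e => v ∈ e), B v e ≤ 1)
    (hprod : ∀ e ∈ E, α ≤ ∏ v ∈ e, B v e) :
    specRad r E ≤ (Nat.factorial (r - 1) : ℝ) * α ^ (-(1 : ℝ) / r) :=
  specRad_le_of_subnormal_general r n hr E hunif B hBnn α hα hsum hprod
end

section
/- Let H be a connected r-uniform hypergraph admitting a consistent weighted incidence matrix B with ∑_{e: v∈e} B(v,e) ≥ 1 for all vertices v and ∏_{v∈e} B(v,e) ≤ α for all edges e, with strict inequality in at least one of these conditions at some vertex or edge. Then ρ(H) > (r−1)!·α^{−1/r}. -/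
open Finset

/-- Two vertices are adjacent if some edge contains both. -/
def Step {V : Type} (E : Finset (Finset V)) (a b : V) : Prop := ∃ e ∈ E, a ∈ e ∧ b ∈ e

/-- A hypergraph is connected if every pair of vertices is joined by a walk. -/
def Conn {V : Type} (E : Finset (Finset V)) : Prop :=
  ∀ a b : V, Relation.ReflTransGen (Step E) a b

/-- A weighted incidence matrix is consistent if around every cycle
(closed walk with distinct vertices and edges) the product of ratios is 1. -/
def Consistent {V : Type} (E : Finset (Finset V)) (B : V → Finset V → ℝ) : Prop :=
  ∀ (l : ℕ) (v : Fin (l + 1) → V) (e : Fin l → Finset V),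
    v (Fin.last l) = v 0 →
    (∀ i : Fin l, e i ∈ E ∧ v i.castSucc ∈ e i ∧ v i.succ ∈ e i) →
    Function.Injective e →
    Function.Injective (fun i : Fin l => v i.castSucc) →
    ∏ i : Fin l, B (v i.succ) (e i) / B (v i.castSucc) (e i) = 1


/-!
The consistency of `B` makes the ratios `B c e / B a e` along walks path-independent, so
connectivity yields a positive potential `y` with `y u * B u e = y v * B v e` for all `u, v ∈ e`.
Put `x v = y v ^ (1 / r)`. On each edge the summands `x v ^ r * B v e` are all equal, so their
sum is `r` times their geometric mean `(∏ v ∈ e, x v) * (∏ v ∈ e, B v e) ^ (1 / r)`, which is at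
most `α ^ (1 / r) * ∏ v ∈ e, x v`. Double counting the incidences gives
`∑ v, x v ^ r ≤ ∑ v, x v ^ r * ∑_{e ∋ v} B v e ≤ r * α ^ (1 / r) * ∑ e ∈ E, ∏ v ∈ e, x v`,
one of the two inequalities being strict; `x` is then a test vector for `specRad`.
-/

theorem List.exists_eq_append_cons_append_cons_of_not_nodup_map {α β : Type*} {f : α → β}
    {L : List α} (h : ¬ (L.map f).Nodup) :
    ∃ A p M q C, L = A ++ p :: (M ++ q :: C) ∧ f p = f q := by
  rw [List.Nodup, List.pairwise_map, List.pairwise_iff_forall_sublist] at h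
  push Not at h
  obtain ⟨p, q, hpq, hf⟩ := h
  obtain ⟨r₁, r₂, rfl, hp, hq⟩ := List.cons_sublist_iff.1 hpq
  obtain ⟨A, M₁, rfl⟩ := List.append_of_mem hp
  obtain ⟨M₂, C, rfl⟩ := List.append_of_mem (List.singleton_sublist.1 hq)
  exact ⟨A, p, M₁ ++ M₂, q, C, by simp, hf⟩

section Walk

variable {V : Type*} (E : Finset (Finset V)) (B : V → Finset V → ℝ)

/-- `IsWalk E a L b`: the list `L` of steps `(edge, vertex reached)` is a walk from `a` to `b`. -/
def IsWalk : V → List (Finset V × V) → V → Prop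
  | a, [], b => a = b
  | a, (e, c) :: L, b => e ∈ E ∧ a ∈ e ∧ c ∈ e ∧ IsWalk c L b

noncomputable def walkWeight : V → List (Finset V × V) → ℝ
  | _, [] => 1
  | a, (e, c) :: L => B c e / B a e * walkWeight c L

variable {E B}

@[simp] lemma isWalk_nil {a b : V} : IsWalk E a [] b ↔ a = b := Iff.rfl

@[simp] lemma isWalk_cons {a b c : V} {e : Finset V} {L : List (Finset V × V)} :
    IsWalk E a ((e, c) :: L) b ↔ e ∈ E ∧ a ∈ e ∧ c ∈ e ∧ IsWalk E c L b := Iff.rfl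

@[simp] lemma walkWeight_nil {a : V} : walkWeight B a [] = 1 := rfl

@[simp] lemma walkWeight_cons {a c : V} {e : Finset V} {L : List (Finset V × V)} :
    walkWeight B a ((e, c) :: L) = B c e / B a e * walkWeight B c L := rfl

lemma isWalk_append {a b : V} {L M : List (Finset V × V)} :
    IsWalk E a (L ++ M) b ↔ ∃ c, IsWalk E a L c ∧ IsWalk E c M b := by
  induction L generalizing a with
  | nil => simp
  | cons s L ih => obtain ⟨e, c⟩ := s; simp [ih, and_assoc, exists_and_left]

lemma walkWeight_append {a c : V} {L : List (Finset V × V)} (h : IsWalk E a L c)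
    (M : List (Finset V × V)) :
    walkWeight B a (L ++ M) = walkWeight B a L * walkWeight B c M := by
  induction L generalizing a with
  | nil => obtain rfl : a = c := h; simp
  | cons s L ih => obtain ⟨e, c⟩ := s; simp [ih h.2.2.2, mul_assoc]

lemma IsWalk.walkWeight_pos (hB : ∀ v e, e ∈ E → v ∈ e → 0 < B v e) {a b : V}
    {L : List (Finset V × V)} (h : IsWalk E a L b) : 0 < walkWeight B a L := by
  induction L generalizing a with
  | nil => simp
  | cons s L ih =>
    obtain ⟨e, c⟩ := s
    obtain ⟨he, ha, hc, hL⟩ := h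
    exact mul_pos (div_pos (hB c e he hc) (hB a e he ha)) (ih hL)

lemma IsWalk.exists_reverse (hB : ∀ v e, e ∈ E → v ∈ e → B v e ≠ 0) {a b : V}
    {L : List (Finset V × V)} (h : IsWalk E a L b) :
    ∃ R, IsWalk E b R a ∧ walkWeight B b R * walkWeight B a L = 1 := by
  induction L generalizing a with
  | nil => exact ⟨[], h.symm, by simp⟩
  | cons s L ih =>
    obtain ⟨e, c⟩ := s
    obtain ⟨he, ha, hc, hL⟩ := h
    obtain ⟨R, hR, hRL⟩ := ih hL
    refine ⟨R ++ [(e, a)], isWalk_append.2 ⟨c, hR, by simp [he, ha, hc]⟩, ?_⟩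
    have hstep : B a e / B c e * (B c e / B a e) = 1 := by
      field_simp [hB a e he ha, hB c e he hc]
    rw [walkWeight_append hR, walkWeight_cons, walkWeight_cons, walkWeight_nil]
    linear_combination (walkWeight B b R * walkWeight B c L) * hstep + hRL

lemma IsWalk.getElem_length {a b : V} {L : List (Finset V × V)} (h : IsWalk E a L b) :
    (a :: L.map Prod.snd)[L.length] = b := by
  induction L generalizing a with
  | nil => exact h
  | cons s L ih => obtain ⟨e, c⟩ := s; simpa using ih h.2.2.2

lemma IsWalk.getElem_mem {a b : V} {L : List (Finset V × V)} (h : IsWalk E a L b) (i : ℕ)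
    (hi : i < L.length) :
    L[i].1 ∈ E ∧ (a :: L.map Prod.snd)[i]'(by simp; omega) ∈ L[i].1 ∧
      (a :: L.map Prod.snd)[i + 1]'(by simp; omega) ∈ L[i].1 := by
  induction L generalizing a i with
  | nil => simp at hi
  | cons s L ih =>
    obtain ⟨e, c⟩ := s
    obtain ⟨he, ha, hc, hL⟩ := h
    cases i with
    | zero => exact ⟨he, ha, hc⟩
    | succ i => simpa using ih hL i (by simpa using hi)

lemma IsWalk.dropLast_perm {a : V} {L : List (Finset V × V)} (h : IsWalk E a L a) :
    (a :: L.map Prod.snd).dropLast.Perm (L.map Prod.snd) := by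
  rcases L.eq_nil_or_concat with rfl | ⟨L, ⟨e, c⟩, rfl⟩
  · simp
  rw [List.concat_eq_append] at h ⊢
  obtain ⟨_, -, -, -, -, rfl⟩ := isWalk_append.1 h
  rw [List.map_append, List.map_singleton, ← List.cons_append, List.dropLast_concat]
  exact (List.perm_append_singleton c _).symm

lemma walkWeight_eq_prod (a : V) (L : List (Finset V × V)) :
    walkWeight B a L = ∏ i : Fin L.length,
      B ((a :: L.map Prod.snd)[i.1 + 1]) L[i].1 /
        B ((a :: L.map Prod.snd)[i.1]) L[i].1 := by
  induction L generalizing a with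
  | nil => simp
  | cons s L ih =>
    obtain ⟨e, c⟩ := s
    rw [walkWeight_cons, ih]
    simp only [List.length_cons]
    rw [Fin.prod_univ_succ]
    simp

/-- Exchanging the targets of two steps of a closed walk that share their edge or their target
cuts it into two closed walks. -/
lemma walkWeight_exchange {a u w : V} {e f : Finset V} {A M C : List (Finset V × V)}
    (h : IsWalk E a (A ++ (e, u) :: (M ++ (f, w) :: C)) a) (hew : e = f ∨ u = w) :
    IsWalk E u (M ++ [(f, u)]) u ∧ IsWalk E a (A ++ (e, w) :: C) a ∧
      walkWeight B a (A ++ (e, u) :: (M ++ (f, w) :: C)) =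
        walkWeight B u (M ++ [(f, u)]) * walkWeight B a (A ++ (e, w) :: C) := by
  obtain ⟨p, hA, he, hp, hu, hrest⟩ := isWalk_append.1 h
  obtain ⟨q, hM, hf, hq, hw, hC⟩ := isWalk_append.1 hrest
  have huf : u ∈ f := by rcases hew with rfl | rfl <;> assumption
  have hwe : w ∈ e := by rcases hew with rfl | rfl <;> assumption
  refine ⟨isWalk_append.2 ⟨q, hM, by simp [hf, hq, huf]⟩,
    isWalk_append.2 ⟨p, hA, he, hp, hwe, hC⟩, ?_⟩
  simp only [walkWeight_append hA, walkWeight_append hM, walkWeight_cons, walkWeight_nil]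
  rcases hew with rfl | rfl <;> ring

end Walk

section Consistent

variable {V : Type} {E : Finset (Finset V)} {B : V → Finset V → ℝ}

lemma exists_isWalk {a b : V} (h : Relation.ReflTransGen (Step E) a b) :
    ∃ L, IsWalk E a L b := by
  induction h using Relation.ReflTransGen.head_induction_on with
  | refl => exact ⟨[], rfl⟩
  | head hstep _ ih =>
    obtain ⟨e, he, ha, hc⟩ := hstep
    obtain ⟨L, hL⟩ := ih
    exact ⟨(e, _) :: L, he, ha, hc, hL⟩

lemma walkWeight_eq_one_of_isCycle (hcons : Consistent E B) {a : V} {L : List (Finset V × V)}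
    (h : IsWalk E a L a) (hedges : (L.map Prod.fst).Nodup) (hverts : (L.map Prod.snd).Nodup) :
    walkWeight B a L = 1 := by
  have hnd := h.dropLast_perm.nodup_iff.2 hverts
  rw [walkWeight_eq_prod]
  refine hcons L.length (fun i => (a :: L.map Prod.snd)[i.1]) (fun i => L[i].1)
    h.getElem_length (fun i => h.getElem_mem i i.2) ?_ ?_
  · intro i j hij
    exact Fin.ext ((hedges.getElem_inj_iff (hi := by simp) (hj := by simp)).1 (by simpa using hij))
  · intro i j hij
    refine Fin.ext ((hnd.getElem_inj_iff (hi := by simp) (hj := by simp)).1 ?_)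
    simpa [List.getElem_dropLast] using hij

/-- A closed walk that is not a cycle splits, by `walkWeight_exchange`, into two shorter ones. -/
theorem IsWalk.walkWeight_eq_one (hcons : Consistent E B) {a : V} {L : List (Finset V × V)}
    (h : IsWalk E a L a) : walkWeight B a L = 1 := by
  induction hl : L.length using Nat.strong_induction_on generalizing a L with
  | _ l ih =>
  by_cases hcycle : (L.map Prod.fst).Nodup ∧ (L.map Prod.snd).Nodup
  · exact walkWeight_eq_one_of_isCycle hcons h hcycle.1 hcycle.2
  obtain ⟨A, ⟨e, u⟩, M, ⟨f, w⟩, C, rfl, hew⟩ :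
      ∃ A s M t C, L = A ++ s :: (M ++ t :: C) ∧ (s.1 = t.1 ∨ s.2 = t.2) := by
    rcases not_and_or.1 hcycle with hnd | hnd <;>
      obtain ⟨A, s, M, t, C, hL, hst⟩ := List.exists_eq_append_cons_append_cons_of_not_nodup_map hnd
    exacts [⟨A, s, M, t, C, hL, .inl hst⟩, ⟨A, s, M, t, C, hL, .inr hst⟩]
  obtain ⟨h₁, h₂, hweight⟩ := walkWeight_exchange (B := B) h hew
  subst hl
  rw [hweight, ih _ (by simp; omega) h₁ rfl, ih _ (by simp) h₂ rfl, one_mul]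

lemma walkWeight_eq_of_isWalk (hB : ∀ v e, e ∈ E → v ∈ e → B v e ≠ 0) (hcons : Consistent E B)
    {a b : V} {L L' : List (Finset V × V)} (h : IsWalk E a L b) (h' : IsWalk E a L' b) :
    walkWeight B a L = walkWeight B a L' := by
  obtain ⟨R, hR, hRL'⟩ := h'.exists_reverse hB
  have hRL : walkWeight B b R * walkWeight B a L = 1 := by
    rw [mul_comm, ← walkWeight_append h]
    exact IsWalk.walkWeight_eq_one hcons (isWalk_append.2 ⟨b, h, hR⟩)
  exact mul_left_cancel₀ (left_ne_zero_of_mul_eq_one hRL) (hRL.trans hRL'.symm)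

theorem exists_pos_potential (hconn : Conn E) (hB : ∀ v e, e ∈ E → v ∈ e → 0 < B v e)
    (hcons : Consistent E B) :
    ∃ y : V → ℝ, (∀ v, 0 < y v) ∧ ∀ e ∈ E, ∀ u ∈ e, ∀ v ∈ e, y u * B u e = y v * B v e := by
  rcases isEmpty_or_nonempty V with _ | ⟨⟨v₀⟩⟩
  · exact ⟨fun _ => 1, fun _ => one_pos, fun _ _ u => isEmptyElim u⟩
  choose P hP using fun v => exists_isWalk (hconn v v₀)
  refine ⟨fun v => walkWeight B v (P v), fun v => (hP v).walkWeight_pos hB, ?_⟩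
  intro e he u hu v hv
  have hstep : walkWeight B u ((e, v) :: P v) = walkWeight B u (P u) :=
    walkWeight_eq_of_isWalk (fun v e he hv => (hB v e he hv).ne') hcons
      ⟨he, hu, hv, hP v⟩ (hP u)
  rw [walkWeight_cons] at hstep
  dsimp only
  rw [← hstep]
  field_simp [(hB u e he hu).ne']

theorem exists_pos_pow_potential {r : ℕ} (hr : r ≠ 0) (hconn : Conn E)
    (hB : ∀ v e, e ∈ E → v ∈ e → 0 < B v e) (hcons : Consistent E B) :
    ∃ x : V → ℝ, (∀ v, 0 < x v) ∧
      ∀ e ∈ E, ∀ u ∈ e, ∀ v ∈ e, x u ^ r * B u e = x v ^ r * B v e := by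
  obtain ⟨y, hy, hbal⟩ := exists_pos_potential hconn hB hcons
  have hpow : ∀ v, (y v ^ (r : ℝ)⁻¹) ^ r = y v := fun v => Real.rpow_inv_natCast_pow (hy v).le hr
  exact ⟨fun v => y v ^ (r : ℝ)⁻¹, fun v => Real.rpow_pos_of_pos (hy v) _,
    fun e he u hu v hv => by simp only [hpow]; exact hbal e he u hu v hv⟩

end Consistent

section Supernormal

variable {V : Type*} {B : V → Finset V → ℝ} {r : ℕ} {x : V → ℝ}

lemma sum_pow_mul_pow_eq {e : Finset V} (hcard : e.card = r)
    (hbal : ∀ u ∈ e, ∀ v ∈ e, x u ^ r * B u e = x v ^ r * B v e) :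
    (∑ v ∈ e, x v ^ r * B v e) ^ r = (r * ∏ v ∈ e, x v) ^ r * ∏ v ∈ e, B v e := by
  rcases e.eq_empty_or_nonempty with rfl | ⟨u, hu⟩
  · simp [← hcard]
  have hconst : ∀ v ∈ e, x v ^ r * B v e = x u ^ r * B u e := fun v hv => hbal v hv u hu
  have hprod : (x u ^ r * B u e) ^ r = (∏ v ∈ e, x v) ^ r * ∏ v ∈ e, B v e :=
    calc (x u ^ r * B u e) ^ r = ∏ v ∈ e, x v ^ r * B v e := by
          rw [Finset.prod_eq_pow_card hconst, hcard]
      _ = (∏ v ∈ e, x v) ^ r * ∏ v ∈ e, B v e := by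
          rw [Finset.prod_mul_distrib, Finset.prod_pow]
  rw [Finset.sum_eq_card_nsmul hconst, hcard, nsmul_eq_mul, mul_pow, hprod, mul_pow]
  ring

lemma sum_pow_mul_le {e : Finset V} (hx : ∀ v, 0 ≤ x v) (hr : r ≠ 0) (hcard : e.card = r)
    (hbal : ∀ u ∈ e, ∀ v ∈ e, x u ^ r * B u e = x v ^ r * B v e) {A : ℝ} (hA : 0 ≤ A)
    (hB : ∏ v ∈ e, B v e ≤ A ^ r) :
    ∑ v ∈ e, x v ^ r * B v e ≤ r * A * ∏ v ∈ e, x v := by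
  have hP : 0 ≤ (r : ℝ) * ∏ v ∈ e, x v :=
    mul_nonneg r.cast_nonneg (Finset.prod_nonneg fun v _ => hx v)
  refine le_of_pow_le_pow_left₀ hr (by rw [mul_right_comm]; exact mul_nonneg hP hA) ?_
  rw [sum_pow_mul_pow_eq hcard hbal, mul_right_comm, mul_pow (_ * _)]
  exact mul_le_mul_of_nonneg_left hB (pow_nonneg hP r)

lemma sum_pow_mul_lt {e : Finset V} (hx : ∀ v, 0 < x v) (hr : r ≠ 0) (hcard : e.card = r)
    (hbal : ∀ u ∈ e, ∀ v ∈ e, x u ^ r * B u e = x v ^ r * B v e) {A : ℝ} (hA : 0 ≤ A)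
    (hB : ∏ v ∈ e, B v e < A ^ r) :
    ∑ v ∈ e, x v ^ r * B v e < r * A * ∏ v ∈ e, x v := by
  have hP : 0 < (r : ℝ) * ∏ v ∈ e, x v :=
    mul_pos (Nat.cast_pos.2 (Nat.pos_of_ne_zero hr)) (Finset.prod_pos fun v _ => hx v)
  refine lt_of_pow_lt_pow_left₀ r (by rw [mul_right_comm]; exact mul_nonneg hP.le hA) ?_
  rw [sum_pow_mul_pow_eq hcard hbal, mul_right_comm, mul_pow (_ * _)]
  exact mul_lt_mul_of_pos_left hB (pow_pos hP r)

variable [Fintype V] [DecidableEq V]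

lemma sum_sum_filter_mem_eq_sum_sum (E : Finset (Finset V)) (f : V → Finset V → ℝ) :
    ∑ v, ∑ e ∈ E.filter (fun e => v ∈ e), f v e = ∑ e ∈ E, ∑ v ∈ e, f v e :=
  Finset.sum_comm' fun v e => by simp [and_comm]

variable {E : Finset (Finset V)}

theorem sum_pow_lt_of_strictly_supernormal (hr : r ≠ 0) (hunif : ∀ e ∈ E, e.card = r)
    (hx : ∀ v, 0 < x v) (hbal : ∀ e ∈ E, ∀ u ∈ e, ∀ v ∈ e, x u ^ r * B u e = x v ^ r * B v e)
    {A : ℝ} (hA : 0 ≤ A) (hsum : ∀ v, 1 ≤ ∑ e ∈ E.filter (fun e => v ∈ e), B v e)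
    (hprod : ∀ e ∈ E, ∏ v ∈ e, B v e ≤ A ^ r)
    (hstrict : (∃ v, 1 < ∑ e ∈ E.filter (fun e => v ∈ e), B v e) ∨
      (∃ e ∈ E, ∏ v ∈ e, B v e < A ^ r)) :
    ∑ v, x v ^ r < r * A * ∑ e ∈ E, ∏ v ∈ e, x v := by
  have hvert : ∀ v, x v ^ r ≤ x v ^ r * ∑ e ∈ E.filter (fun e => v ∈ e), B v e :=
    fun v => le_mul_of_one_le_right (pow_pos (hx v) r).le (hsum v)
  have hedge : ∀ e ∈ E, ∑ v ∈ e, x v ^ r * B v e ≤ r * A * ∏ v ∈ e, x v := fun e he =>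
    sum_pow_mul_le (fun v => (hx v).le) hr (hunif e he) (hbal e he) hA (hprod e he)
  have hcount : ∑ v, x v ^ r * ∑ e ∈ E.filter (fun e => v ∈ e), B v e =
      ∑ e ∈ E, ∑ v ∈ e, x v ^ r * B v e := by
    simp only [Finset.mul_sum, sum_sum_filter_mem_eq_sum_sum]
  rw [Finset.mul_sum]
  rcases hstrict with ⟨v₀, hv₀⟩ | ⟨e₀, he₀, he₀lt⟩
  · calc ∑ v, x v ^ r < ∑ v, x v ^ r * ∑ e ∈ E.filter (fun e => v ∈ e), B v e :=
          Finset.sum_lt_sum (fun v _ => hvert v)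
            ⟨v₀, Finset.mem_univ _, lt_mul_of_one_lt_right (pow_pos (hx v₀) r) hv₀⟩
      _ = ∑ e ∈ E, ∑ v ∈ e, x v ^ r * B v e := hcount
      _ ≤ _ := Finset.sum_le_sum hedge
  · calc ∑ v, x v ^ r ≤ ∑ v, x v ^ r * ∑ e ∈ E.filter (fun e => v ∈ e), B v e :=
          Finset.sum_le_sum fun v _ => hvert v
      _ = ∑ e ∈ E, ∑ v ∈ e, x v ^ r * B v e := hcount
      _ < _ := Finset.sum_lt_sum hedge
          ⟨e₀, he₀, sum_pow_mul_lt hx hr (hunif e₀ he₀) (hbal e₀ he₀) hA he₀lt⟩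

end Supernormal

section SpectralRadius

variable {V : Type} [Fintype V] {E : Finset (Finset V)} {r : ℕ} {x : V → ℝ}

lemma prod_le_sum_pow [Nonempty V] (hx : ∀ v, 0 ≤ x v) {e : Finset V} (hcard : e.card = r) :
    ∏ v ∈ e, x v ≤ ∑ v, x v ^ r := by
  obtain ⟨u, -, hu⟩ := Finset.exists_max_image Finset.univ x Finset.univ_nonempty
  calc ∏ v ∈ e, x v ≤ ∏ _v ∈ e, x u :=
        Finset.prod_le_prod (fun v _ => hx v) fun v _ => hu v (Finset.mem_univ v)
    _ = x u ^ r := by rw [Finset.prod_const, hcard]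
    _ ≤ ∑ v, x v ^ r := Finset.single_le_sum (fun v _ => pow_nonneg (hx v) r) (Finset.mem_univ u)

lemma bddAbove_rayleigh (hunif : ∀ e ∈ E, e.card = r) :
    BddAbove {ρ : ℝ | ∃ x : V → ℝ, (∀ v, 0 ≤ x v) ∧ x ≠ 0 ∧
      ρ = (Nat.factorial r : ℝ) * (∑ e ∈ E, ∏ v ∈ e, x v) / (∑ v, x v ^ r)} := by
  refine ⟨Nat.factorial r * E.card, ?_⟩
  rintro ρ ⟨x, hx, hx0, rfl⟩
  have : Nonempty V := let ⟨w, _⟩ := Function.ne_iff.1 hx0; ⟨w⟩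
  have hS : ∑ e ∈ E, ∏ v ∈ e, x v ≤ E.card * ∑ v, x v ^ r := by
    simpa using Finset.sum_le_sum fun e he => prod_le_sum_pow (x := x) hx (hunif e he)
  refine div_le_of_le_mul₀ (Finset.sum_nonneg fun v _ => pow_nonneg (hx v) r) (by positivity) ?_
  rw [mul_assoc]
  exact mul_le_mul_of_nonneg_left hS (by positivity)

lemma le_specRad (hunif : ∀ e ∈ E, e.card = r) (hx : ∀ v, 0 ≤ x v) (hx0 : x ≠ 0) :
    (Nat.factorial r : ℝ) * (∑ e ∈ E, ∏ v ∈ e, x v) / (∑ v, x v ^ r) ≤ specRad r E :=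
  le_csSup (bddAbove_rayleigh hunif) ⟨x, hx, hx0, rfl⟩

end SpectralRadius

theorem specRad_gt_of_strictly_supernormal_general (r n : ℕ) (hr : 1 ≤ r)
    (E : Finset (Finset (Fin n))) (hunif : ∀ e ∈ E, e.card = r)
    (hconn : Conn E)
    (B : Fin n → Finset (Fin n) → ℝ)
    (hBpos : ∀ v e, e ∈ E → v ∈ e → 0 < B v e)
    (hcons : Consistent E B)
    (α : ℝ) (hα : 0 < α)
    (hsum : ∀ v, 1 ≤ ∑ e ∈ E.filter (fun e => v ∈ e), B v e)
    (hprod : ∀ e ∈ E, ∏ v ∈ e, B v e ≤ α)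
    (hstrict : (∃ v, 1 < ∑ e ∈ E.filter (fun e => v ∈ e), B v e) ∨
      (∃ e ∈ E, ∏ v ∈ e, B v e < α)) :
    (Nat.factorial (r - 1) : ℝ) * α ^ (-(1 : ℝ) / r) < specRad r E := by
  have hr0 : r ≠ 0 := by omega
  obtain ⟨v₀⟩ : Nonempty (Fin n) := by
    rcases hstrict with ⟨v, -⟩ | ⟨e, he, -⟩
    · exact ⟨v⟩
    · exact ⟨(Finset.card_pos.1 (by rw [hunif e he]; omega)).choose⟩
  obtain ⟨x, hx, hbal⟩ := exists_pos_pow_potential hr0 hconn hBpos hcons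
  set A := α ^ (r : ℝ)⁻¹
  have hA : 0 < A := Real.rpow_pos_of_pos hα _
  have hAr : A ^ r = α := Real.rpow_inv_natCast_pow hα.le hr0
  have hT : 0 < ∑ v, x v ^ r := Finset.sum_pos (fun v _ => pow_pos (hx v) r) ⟨v₀, Finset.mem_univ _⟩
  have hkey := sum_pow_lt_of_strictly_supernormal hr0 hunif hx hbal hA.le hsum
    (by rwa [hAr]) (by rwa [hAr])
  calc (Nat.factorial (r - 1) : ℝ) * α ^ (-(1 : ℝ) / r) = (r - 1).factorial / A := by
        rw [neg_div, one_div, Real.rpow_neg hα.le, div_eq_mul_inv]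
    _ < r.factorial * (∑ e ∈ E, ∏ v ∈ e, x v) / ∑ v, x v ^ r := by
        rw [div_lt_div_iff₀ hA hT, ← Nat.mul_factorial_pred hr0, Nat.cast_mul]
        calc _ < ((r - 1).factorial : ℝ) * (r * A * ∑ e ∈ E, ∏ v ∈ e, x v) :=
              mul_lt_mul_of_pos_left hkey (by positivity)
          _ = _ := by ring
    _ ≤ specRad r E := le_specRad hunif (fun v => (hx v).le) fun h => (hx v₀).ne' (congrFun h v₀)

/-- a connected hypergraph that is strictly and consistently
α-supernormal has spectral radius strictly greater than `(r-1)! * α^(-1/r)`. -/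
theorem specRad_gt_of_strictly_supernormal (r n : ℕ) (hr : 1 ≤ r)
    (E : Finset (Finset (Fin n))) (hunif : ∀ e ∈ E, e.card = r)
    (hconn : Conn E)
    (B : Fin n → Finset (Fin n) → ℝ)
    (hBpos : ∀ v e, e ∈ E → v ∈ e → 0 < B v e)
    (hBzero : ∀ v e, v ∉ e → B v e = 0)
    (hcons : Consistent E B)
    (α : ℝ) (hα : 0 < α)
    (hsum : ∀ v, 1 ≤ ∑ e ∈ E.filter (fun e => v ∈ e), B v e)
    (hprod : ∀ e ∈ E, ∏ v ∈ e, B v e ≤ α)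
    (hstrict : (∃ v, 1 < ∑ e ∈ E.filter (fun e => v ∈ e), B v e) ∨
      (∃ e ∈ E, ∏ v ∈ e, B v e < α)) :
    (Nat.factorial (r - 1) : ℝ) * α ^ (-(1 : ℝ) / r) < specRad r E :=
  specRad_gt_of_strictly_supernormal_general r n hr E hunif hconn B hBpos hcons α hα hsum hprod
    hstrict
end

section
/- For every r ≥ 2 and n ≥ 1, the r-uniform loose path A_n^{(r)} with n edges satisfies ρ(A_n^{(r)}) < (r−1)!·4^{1/r}. -/
open Finset

/-- `α' = 1/4 + 1/(n+2)^2`, slightly above `1/4`. -/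
noncomputable def lpAl (n : ℕ) : ℝ := 1/4 + (((n : ℝ) + 2)^2)⁻¹

/-- auxiliary sequence `σ_i = (i+1)(n+2-i)`. -/
noncomputable def lpSg (n i : ℕ) : ℝ := ((i : ℝ) + 1) * ((n : ℝ) + 2 - (i : ℝ))

/-- the weight `t_j` that the intersection vertex of edges `j` and `j+1` gives to edge `j`. -/
noncomputable def lpT (n j : ℕ) : ℝ := 2 * lpAl n * lpSg n j / lpSg n (j + 1)

lemma lpAl_pos (n : ℕ) : 0 < lpAl n := by
  unfold lpAl; positivity

lemma lpAl_gt (n : ℕ) : 1/4 < lpAl n := by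
  unfold lpAl
  have : (0:ℝ) < (((n : ℝ) + 2)^2)⁻¹ := by positivity
  linarith

lemma inv_sq_le (K : ℝ) (hK : 3 ≤ K) : (K^2)⁻¹ ≤ 1/9 := by
  rw [inv_eq_one_div, div_le_div_iff₀ (by positivity) (by norm_num)]
  nlinarith

lemma lpAl_le_one (n : ℕ) : lpAl n ≤ 1 := by
  unfold lpAl
  have hn : (0:ℝ) ≤ (n:ℝ) := Nat.cast_nonneg n
  have h : (((n:ℝ)+2)^2)⁻¹ ≤ 1/4 := by
    rw [inv_eq_one_div, div_le_div_iff₀ (by positivity) (by norm_num)]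
    nlinarith
  linarith

lemma lpSg_pos (n i : ℕ) (hi : i ≤ n + 1) : 0 < lpSg n i := by
  unfold lpSg
  have : (i:ℝ) ≤ (n:ℝ) + 1 := by exact_mod_cast hi
  nlinarith

/-- `t_0 ≥ α'`. -/
lemma lpT_zero_ge (n : ℕ) (hn : 2 ≤ n) : lpAl n ≤ lpT n 0 := by
  have hα := lpAl_pos n
  have hσ1 : 0 < lpSg n 1 := lpSg_pos n 1 (by omega)
  rw [lpT, le_div_iff₀ hσ1]
  have hσ0 : lpSg n 0 = (n:ℝ) + 2 := by unfold lpSg; push_cast; ring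
  have hσ1e : lpSg n 1 = 2 * ((n:ℝ) + 1) := by unfold lpSg; push_cast; ring
  rw [hσ0, hσ1e]
  nlinarith

/-- `0 ≤ t_j` in the relevant range. -/
lemma lpT_nonneg (n j : ℕ) (hj : j + 2 ≤ n) : 0 ≤ lpT n j := by
  have hα := lpAl_pos n
  have hσ0 : 0 < lpSg n j := lpSg_pos n j (by omega)
  have hσ1 : 0 < lpSg n (j+1) := lpSg_pos n (j+1) (by omega)
  unfold lpT; positivity

lemma lpT_le_one (n j : ℕ) (hj : j + 2 ≤ n) : lpT n j ≤ 1 := by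
  have hσ1 : 0 < lpSg n (j+1) := lpSg_pos n (j+1) (by omega)
  rw [lpT, div_le_one hσ1]
  have hjn : (j:ℝ) + 2 ≤ (n:ℝ) := by exact_mod_cast hj
  have hj0 : (0:ℝ) ≤ (j:ℝ) := Nat.cast_nonneg j
  rw [lpAl, lpSg, lpSg]
  push_cast
  set K : ℝ := (n:ℝ) + 2 with hKdef
  have hd : (4:ℝ) ≤ K - j := by simp only [hKdef]; linarith
  have hK3 : (3:ℝ) ≤ K := by simp only [hKdef]; linarith
  have hε : (K^2)⁻¹ ≤ 1/9 := inv_sq_le K hK3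
  have hεp : (0:ℝ) < (K^2)⁻¹ := by positivity
  nlinarith [mul_le_mul_of_nonneg_right hε
      (mul_nonneg (by linarith : (0:ℝ) ≤ (j:ℝ)+1) (by linarith : (0:ℝ) ≤ K - j)),
    mul_nonneg hj0 (by linarith : (0:ℝ) ≤ K - (j:ℝ) - 4)]

/-- interior edges: `(1 - t_j) * t_{j+1} ≥ α'`. -/
lemma lpT_interior (n j : ℕ) (hj : j + 3 ≤ n) : lpAl n ≤ (1 - lpT n j) * lpT n (j + 1) := by
  have hα := lpAl_pos n
  have hσ0 : 0 < lpSg n j := lpSg_pos n j (by omega)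
  have hσ1 : 0 < lpSg n (j+1) := lpSg_pos n (j+1) (by omega)
  have hσ2 : 0 < lpSg n (j+2) := lpSg_pos n (j+2) (by omega)
  have key : lpSg n (j+2) + 4 * lpAl n * lpSg n j ≤ 2 * lpSg n (j+1) := by
    rw [lpAl, lpSg, lpSg, lpSg]
    push_cast
    set K : ℝ := (n:ℝ) + 2 with hKdef
    have hj0 : (0:ℝ) ≤ (j:ℝ) := Nat.cast_nonneg j
    have hjn : (j:ℝ) + 3 ≤ (n:ℝ) := by exact_mod_cast hj
    have hK : (3:ℝ) ≤ K := by simp only [hKdef]; linarith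
    have hK2 : (0:ℝ) < K^2 := by positivity
    have hεK : (K^2)⁻¹ * K^2 = 1 := inv_mul_cancel₀ (ne_of_gt hK2)
    have hεp : (0:ℝ) < (K^2)⁻¹ := by positivity
    have h2 : 2*(((j:ℝ)+1)*(K-j)) ≤ K^2 := by
      nlinarith [sq_nonneg (K - 2*(j:ℝ) - 1), sq_nonneg (K - 1)]
    -- hence 4 * (K^2)⁻¹ * σ_j ≤ 2
    nlinarith [mul_le_mul_of_nonneg_left h2 (le_of_lt hεp)]
  have expand : (1 - lpT n j) * lpT n (j + 1) =
      2 * lpAl n * (lpSg n (j+1) - 2 * lpAl n * lpSg n j) / lpSg n (j+2) := by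
    rw [lpT, lpT]
    field_simp
  rw [expand, le_div_iff₀ hσ2]
  nlinarith [key, hα]

/-- last edge: `t_{n-2} ≤ 1 - α'` (stated with `n = m+2`). -/
lemma lpT_last (m : ℕ) : lpT (m+2) m ≤ 1 - lpAl (m+2) := by
  have hσ1 : 0 < lpSg (m+2) (m+1) := lpSg_pos (m+2) (m+1) (by omega)
  rw [lpT, div_le_iff₀ hσ1]
  rw [lpAl, lpSg, lpSg]
  push_cast
  set M : ℝ := (m:ℝ) with hM
  have hM0 : (0:ℝ) ≤ M := Nat.cast_nonneg m
  have hK2 : (0:ℝ) < (M+2+2)^2 := by positivity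
  have h1 : (((M+2+2)^2)⁻¹ : ℝ) ≤ (M+10)/(4*(11*M+14)) := by
    rw [inv_eq_one_div, div_le_div_iff₀ (by positivity) (by positivity)]
    nlinarith [sq_nonneg M, mul_nonneg (mul_nonneg hM0 hM0) hM0]
  have h2 : (0:ℝ) < 4*(11*M+14) := by linarith
  have h1' : ((M+2+2)^2)⁻¹ * (4*(11*M+14)) ≤ M+10 := (le_div_iff₀ h2).mp h1
  nlinarith [h1']

/-- the `j`-th edge of the path, as a function on `ℕ`. -/
def lpE {n N : ℕ} (e : Fin n → Finset (Fin N)) (j : ℕ) : Finset (Fin N) :=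
  if h : j < n then e ⟨j, h⟩ else ∅

lemma lpE_eq {n N : ℕ} (e : Fin n → Finset (Fin N)) (j : ℕ) (h : j < n) :
    lpE e j = e ⟨j, h⟩ := dif_pos h

/-- weighted incidence: weight of vertex `v` in edge `j`. -/
noncomputable def lpW {n N : ℕ} (e : Fin n → Finset (Fin N)) (v : Fin N) (j : ℕ) : ℝ :=
  if j + 1 < n ∧ v ∈ lpE e (j+1) then lpT n j
  else if 1 ≤ j ∧ v ∈ lpE e (j-1) then 1 - lpT n (j-1) else 1

section Test
variable {n N : ℕ} (e : Fin n → Finset (Fin N))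
  (hconsec' : ∀ j : ℕ, j + 1 < n → (lpE e j ∩ lpE e (j+1)).card = 1)
  (hfar' : ∀ i j : ℕ, i + 2 ≤ j → j < n → lpE e i ∩ lpE e j = ∅)

include hfar' in
lemma lpDeg (v : Fin N) :
    ∑ j ∈ (range n).filter (fun j => v ∈ lpE e j), lpW e v j ≤ 1 := by
  classical
  set F := (range n).filter (fun j => v ∈ lpE e j) with hF
  rcases eq_or_ne F ∅ with h | h
  · rw [h]; simp
  · have hne : F.Nonempty := nonempty_iff_ne_empty.mpr h
    set j0 := F.min' hne with hj0
    have hj0F : j0 ∈ F := F.min'_mem hne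
    have hj0n : j0 < n := mem_range.mp (mem_filter.mp hj0F).1
    have hvj0 : v ∈ lpE e j0 := (mem_filter.mp hj0F).2
    have hsub : F ⊆ {j0, j0+1} := by
      intro j hjF
      have hjn : j < n := mem_range.mp (mem_filter.mp hjF).1
      have hvj : v ∈ lpE e j := (mem_filter.mp hjF).2
      have hge : j0 ≤ j := F.min'_le j hjF
      by_contra hmem
      simp only [mem_insert, mem_singleton] at hmem
      push_neg at hmem
      have h2 : j0 + 2 ≤ j := by omega
      have hemp := hfar' j0 j h2 hjn
      have hv2 : v ∈ lpE e j0 ∩ lpE e j := mem_inter.mpr ⟨hvj0, hvj⟩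
      rw [hemp] at hv2
      exact absurd hv2 (notMem_empty v)
    by_cases h1 : j0 + 1 ∈ F
    · have hFeq : F = {j0, j0+1} := by
        apply Subset.antisymm hsub
        intro j hj; simp only [mem_insert, mem_singleton] at hj
        rcases hj with rfl | rfl
        · exact hj0F
        · exact h1
      rw [hFeq, sum_pair (by omega : j0 ≠ j0 + 1)]
      have hj1n : j0 + 1 < n := mem_range.mp (mem_filter.mp h1).1
      have hvj1 : v ∈ lpE e (j0+1) := (mem_filter.mp h1).2
      have hw0 : lpW e v j0 = lpT n j0 := by
        rw [lpW, if_pos ⟨hj1n, hvj1⟩]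
      have hw1 : lpW e v (j0+1) = 1 - lpT n j0 := by
        have hc1 : ¬(j0 + 1 + 1 < n ∧ v ∈ lpE e (j0+1+1)) := by
          rintro ⟨hlt, hmem2⟩
          have hemp := hfar' j0 (j0+1+1) (by omega) hlt
          have hv2 : v ∈ lpE e j0 ∩ lpE e (j0+1+1) := mem_inter.mpr ⟨hvj0, hmem2⟩
          rw [hemp] at hv2
          exact absurd hv2 (notMem_empty v)
        have hc2 : 1 ≤ j0 + 1 ∧ v ∈ lpE e (j0+1-1) := ⟨by omega, by simpa using hvj0⟩
        rw [lpW, if_neg hc1, if_pos hc2]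
        norm_num
      rw [hw0, hw1]; ring_nf; exact le_refl 1
    · have hFeq : F = {j0} := by
        apply Subset.antisymm
        · intro j hj
          have h2 := hsub hj; simp only [mem_insert, mem_singleton] at h2
          rcases h2 with rfl | rfl
          · exact mem_singleton_self _
          · exact absurd hj h1
        · simp [hj0F]
      rw [hFeq, sum_singleton]
      have hw : lpW e v j0 = 1 := by
        have hc1 : ¬(j0 + 1 < n ∧ v ∈ lpE e (j0+1)) := by
          rintro ⟨hlt, hmem⟩
          exact h1 (mem_filter.mpr ⟨mem_range.mpr hlt, hmem⟩)
        have hc2 : ¬(1 ≤ j0 ∧ v ∈ lpE e (j0-1)) := by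
          rintro ⟨hge, hmem⟩
          have hmemF : j0 - 1 ∈ F := by
            rw [hF]; exact mem_filter.mpr ⟨mem_range.mpr (by omega), hmem⟩
          have := F.min'_le _ hmemF
          omega
        rw [lpW, if_neg hc1, if_neg hc2]
      rw [hw]

include hconsec' hfar' in
lemma lpProd (j : ℕ) (hj : j < n) :
    lpAl n ≤ ∏ v ∈ lpE e j, lpW e v j := by
  classical
  by_cases hR : j + 1 < n
  · obtain ⟨a, ha⟩ := card_eq_one.mp (hconsec' j hR)
    have haj : a ∈ lpE e j := (mem_inter.mp (ha ▸ mem_singleton_self a)).1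
    have haj1 : a ∈ lpE e (j+1) := (mem_inter.mp (ha ▸ mem_singleton_self a)).2
    have hwa : lpW e a j = lpT n j := by rw [lpW, if_pos ⟨hR, haj1⟩]
    by_cases hL : 1 ≤ j
    · -- interior edge
      obtain ⟨b, hb⟩ := card_eq_one.mp (hconsec' (j-1) (by omega))
      rw [(by omega : j - 1 + 1 = j)] at hb
      have hbj : b ∈ lpE e j := (mem_inter.mp (hb ▸ mem_singleton_self b)).2
      have hbj1 : b ∈ lpE e (j-1) := (mem_inter.mp (hb ▸ mem_singleton_self b)).1
      have hab : a ≠ b := by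
        rintro rfl
        have hemp := hfar' (j-1) (j+1) (by omega) hR
        have hin : a ∈ lpE e (j-1) ∩ lpE e (j+1) := mem_inter.mpr ⟨hbj1, haj1⟩
        rw [hemp] at hin; exact absurd hin (notMem_empty a)
      have hwb : lpW e b j = 1 - lpT n (j-1) := by
        have hc1 : ¬(j + 1 < n ∧ b ∈ lpE e (j+1)) := by
          rintro ⟨-, hmem⟩
          have hin : b ∈ lpE e j ∩ lpE e (j+1) := mem_inter.mpr ⟨hbj, hmem⟩
          rw [ha] at hin
          exact hab (mem_singleton.mp hin).symm
        rw [lpW, if_neg hc1, if_pos ⟨hL, hbj1⟩]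
      have hbmem : b ∈ (lpE e j).erase a := mem_erase.mpr ⟨Ne.symm hab, hbj⟩
      have hrest : ∏ v ∈ ((lpE e j).erase a).erase b, lpW e v j = 1 := by
        apply prod_eq_one
        intro v hv
        have hvb : v ≠ b := (mem_erase.mp hv).1
        have hva : v ≠ a := (mem_erase.mp (mem_erase.mp hv).2).1
        have hvj : v ∈ lpE e j := (mem_erase.mp (mem_erase.mp hv).2).2
        have hc1 : ¬(j + 1 < n ∧ v ∈ lpE e (j+1)) := by
          rintro ⟨-, hmem⟩
          exact hva (mem_singleton.mp (ha ▸ mem_inter.mpr ⟨hvj, hmem⟩))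
        have hc2 : ¬(1 ≤ j ∧ v ∈ lpE e (j-1)) := by
          rintro ⟨-, hmem⟩
          exact hvb (mem_singleton.mp (hb ▸ mem_inter.mpr ⟨hmem, hvj⟩))
        rw [lpW, if_neg hc1, if_neg hc2]
      have hPP : ∏ v ∈ lpE e j, lpW e v j
          = lpW e a j * (lpW e b j * ∏ v ∈ ((lpE e j).erase a).erase b, lpW e v j) := by
        rw [mul_prod_erase _ (fun v => lpW e v j) hbmem, mul_prod_erase _ (fun v => lpW e v j) haj]
      rw [hPP, hrest, mul_one, hwa, hwb, mul_comm]
      have hint := lpT_interior n (j-1) (by omega)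
      rw [(by omega : j - 1 + 1 = j)] at hint
      exact hint
    · -- first edge, n ≥ 2
      have hj0 : j = 0 := by omega
      subst hj0
      have hrest : ∏ v ∈ (lpE e 0).erase a, lpW e v 0 = 1 := by
        apply prod_eq_one
        intro v hv
        have hva : v ≠ a := (mem_erase.mp hv).1
        have hvj : v ∈ lpE e 0 := (mem_erase.mp hv).2
        have hc1 : ¬(0 + 1 < n ∧ v ∈ lpE e (0+1)) := by
          rintro ⟨-, hmem⟩
          exact hva (mem_singleton.mp (ha ▸ mem_inter.mpr ⟨hvj, hmem⟩))
        have hc2 : ¬(1 ≤ 0 ∧ v ∈ lpE e (0-1)) := by rintro ⟨h0, -⟩; omega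
        rw [lpW, if_neg hc1, if_neg hc2]
      rw [← mul_prod_erase _ (fun v => lpW e v 0) haj, hrest, mul_one, hwa]
      exact lpT_zero_ge n (by omega)
  · by_cases hL : 1 ≤ j
    · -- last edge, n ≥ 2, j = n-1
      obtain ⟨b, hb⟩ := card_eq_one.mp (hconsec' (j-1) (by omega))
      rw [(by omega : j - 1 + 1 = j)] at hb
      have hbj : b ∈ lpE e j := (mem_inter.mp (hb ▸ mem_singleton_self b)).2
      have hbj1 : b ∈ lpE e (j-1) := (mem_inter.mp (hb ▸ mem_singleton_self b)).1
      have hwb : lpW e b j = 1 - lpT n (j-1) := by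
        have hc1 : ¬(j + 1 < n ∧ b ∈ lpE e (j+1)) := by rintro ⟨h, -⟩; exact hR h
        rw [lpW, if_neg hc1, if_pos ⟨hL, hbj1⟩]
      have hrest : ∏ v ∈ (lpE e j).erase b, lpW e v j = 1 := by
        apply prod_eq_one
        intro v hv
        have hvb : v ≠ b := (mem_erase.mp hv).1
        have hvj : v ∈ lpE e j := (mem_erase.mp hv).2
        have hc1 : ¬(j + 1 < n ∧ v ∈ lpE e (j+1)) := by rintro ⟨h, -⟩; exact hR h
        have hc2 : ¬(1 ≤ j ∧ v ∈ lpE e (j-1)) := by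
          rintro ⟨-, hmem⟩
          exact hvb (mem_singleton.mp (hb ▸ mem_inter.mpr ⟨hmem, hvj⟩))
        rw [lpW, if_neg hc1, if_neg hc2]
      rw [← mul_prod_erase _ (fun v => lpW e v j) hbj, hrest, mul_one, hwb]
      have hlast := lpT_last (n-2)
      rw [(by omega : n - 2 + 2 = n)] at hlast
      have hj1 : j - 1 = n - 2 := by omega
      rw [hj1]
      linarith
    · -- n = 1, j = 0
      have hone : ∀ v ∈ lpE e j, lpW e v j = 1 := by
        intro v _
        rw [lpW, if_neg (by rintro ⟨h, -⟩; exact hR h), if_neg (by rintro ⟨h, -⟩; exact hL h)]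
      rw [prod_eq_one hone]
      exact lpAl_le_one n

end Test

/-- the `r`-uniform loose path with `n` edges has spectral radius
strictly less than `(r-1)! * 4^(1/r)`. -/
theorem loosePath_specRad_lt (r n N : ℕ) (hr : 2 ≤ r) (hn : 1 ≤ n)
    (E : Finset (Finset (Fin N))) (e : Fin n → Finset (Fin N))
    (hcard : ∀ i, (e i).card = r)
    (hE : E = Finset.image e Finset.univ)
    (hinj : Function.Injective e)
    (hconsec : ∀ i j : Fin n, (i : ℕ) + 1 = (j : ℕ) → (e i ∩ e j).card = 1)
    (hfar : ∀ i j : Fin n, (i : ℕ) + 2 ≤ (j : ℕ) → e i ∩ e j = ∅)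
    (hcov : ∀ v : Fin N, ∃ i, v ∈ e i) :
    specRad r E < (Nat.factorial (r - 1) : ℝ) * (4 : ℝ) ^ ((1 : ℝ) / r) := by
  classical
  have hrR : (0:ℝ) < (r:ℝ) := by
    have : 0 < r := by omega
    exact_mod_cast this
  have hrne : (r:ℝ) ≠ 0 := ne_of_gt hrR
  have hαpos := lpAl_pos n
  set c : ℝ := (lpAl n)⁻¹ ^ ((1:ℝ)/r) with hc
  have hcpos : 0 < c := Real.rpow_pos_of_pos (by positivity) _
  have hB : (0:ℝ) ≤ (Nat.factorial (r-1) : ℝ) * c := by positivity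
  have hfar' : ∀ i j : ℕ, i + 2 ≤ j → j < n → lpE e i ∩ lpE e j = ∅ := by
    intro i j hij hjn
    have hi : i < n := by omega
    rw [lpE_eq e i hi, lpE_eq e j hjn]
    exact hfar ⟨i, hi⟩ ⟨j, hjn⟩ (by simpa using hij)
  have hconsec' : ∀ j : ℕ, j + 1 < n → (lpE e j ∩ lpE e (j+1)).card = 1 := by
    intro j hj
    rw [lpE_eq e j (by omega), lpE_eq e (j+1) hj]
    exact hconsec _ _ (by simp)
  have hcard' : ∀ j, j < n → (lpE e j).card = r := by
    intro j hj; rw [lpE_eq e j hj]; exact hcard _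
  refine lt_of_le_of_lt (b := (Nat.factorial (r-1) : ℝ) * c) ?_ ?_
  · apply Real.sSup_le _ hB
    rintro ρ ⟨x, hx0, hxne, rfl⟩
    have hS : 0 < ∑ v, x v ^ r := by
      obtain ⟨v, hv⟩ : ∃ v, x v ≠ 0 := Function.ne_iff.mp hxne
      exact Finset.sum_pos' (fun i _ => pow_nonneg (hx0 i) r)
        ⟨v, mem_univ v, pow_pos (lt_of_le_of_ne (hx0 v) (Ne.symm hv)) r⟩
    rw [div_le_iff₀ hS]
    -- nonnegativity of weights
    have hwnn : ∀ (v : Fin N) (j : ℕ), j < n → 0 ≤ lpW e v j := by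
      intro v j hj
      rw [lpW]
      split_ifs with h1 h2
      · exact lpT_nonneg n j (by omega)
      · have := lpT_le_one n (j-1) (by omega)
        linarith
      · norm_num
    -- rewrite the edge sum as a sum over `range n`
    have hsum1 : ∑ s ∈ E, ∏ v ∈ s, x v = ∑ j ∈ range n, ∏ v ∈ lpE e j, x v := by
      rw [hE, Finset.sum_image (fun a _ b _ h => hinj h)]
      rw [← Fin.sum_univ_eq_sum_range (fun j => ∏ v ∈ lpE e j, x v) n]
      refine Finset.sum_congr rfl fun i _ => ?_
      rw [lpE_eq e i i.isLt]
    -- per-edge AM-GM bound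
    have hedge : ∀ j ∈ range n, ∏ v ∈ lpE e j, x v
        ≤ c * ((r:ℝ)⁻¹ * ∑ v ∈ lpE e j, lpW e v j * x v ^ r) := by
      intro j hjr
      have hj : j < n := mem_range.mp hjr
      have hw' : ∑ _v ∈ lpE e j, (r:ℝ)⁻¹ = 1 := by
        rw [sum_const, hcard' j hj, nsmul_eq_mul, mul_inv_cancel₀ hrne]
      have amgm := Real.geom_mean_le_arith_mean_weighted (lpE e j)
        (fun _ => (r:ℝ)⁻¹) (fun v => lpW e v j * x v ^ r)
        (fun _ _ => by positivity) hw'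
        (fun v hv => mul_nonneg (hwnn v j hj) (pow_nonneg (hx0 v) r))
      have hL : ∏ v ∈ lpE e j, (lpW e v j * x v ^ r) ^ ((r:ℝ)⁻¹)
          = (∏ v ∈ lpE e j, lpW e v j) ^ ((r:ℝ)⁻¹) * ∏ v ∈ lpE e j, x v := by
        have e1 : ∀ v ∈ lpE e j, (lpW e v j * x v ^ r) ^ ((r:ℝ)⁻¹)
            = lpW e v j ^ ((r:ℝ)⁻¹) * x v := by
          intro v hv
          rw [Real.mul_rpow (hwnn v j hj) (pow_nonneg (hx0 v) r)]
          congr 1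
          rw [← Real.rpow_natCast (x v) r, ← Real.rpow_mul (hx0 v),
            mul_inv_cancel₀ hrne, Real.rpow_one]
        rw [prod_congr rfl e1, prod_mul_distrib,
          Real.finset_prod_rpow _ _ (fun v hv => hwnn v j hj)]
      rw [hL] at amgm
      have hge : (lpAl n) ^ ((r:ℝ)⁻¹) ≤ (∏ v ∈ lpE e j, lpW e v j) ^ ((r:ℝ)⁻¹) :=
        Real.rpow_le_rpow (le_of_lt hαpos) (lpProd e hconsec' hfar' j hj) (by positivity)
      have hxprod : 0 ≤ ∏ v ∈ lpE e j, x v := prod_nonneg fun v _ => hx0 v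
      have hkey : (lpAl n) ^ ((r:ℝ)⁻¹) * ∏ v ∈ lpE e j, x v
          ≤ (r:ℝ)⁻¹ * ∑ v ∈ lpE e j, lpW e v j * x v ^ r := by
        calc (lpAl n) ^ ((r:ℝ)⁻¹) * ∏ v ∈ lpE e j, x v
            ≤ (∏ v ∈ lpE e j, lpW e v j) ^ ((r:ℝ)⁻¹) * ∏ v ∈ lpE e j, x v :=
              mul_le_mul_of_nonneg_right hge hxprod
          _ ≤ ∑ v ∈ lpE e j, (r:ℝ)⁻¹ * (lpW e v j * x v ^ r) := amgm
          _ = (r:ℝ)⁻¹ * ∑ v ∈ lpE e j, lpW e v j * x v ^ r := by rw [mul_sum]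
      have hαr : 0 < (lpAl n) ^ ((r:ℝ)⁻¹) := Real.rpow_pos_of_pos hαpos _
      have hthis := (le_div_iff₀' hαr).mpr hkey
      rw [div_eq_inv_mul, ← Real.inv_rpow (le_of_lt hαpos), ← mul_assoc] at hthis
      have hceq : c = (lpAl n)⁻¹ ^ ((r:ℝ)⁻¹) := by rw [hc, one_div]
      rw [hceq, ← mul_assoc]
      exact hthis
    -- summing the degree bound
    have hswap : ∑ j ∈ range n, ∑ v ∈ lpE e j, lpW e v j * x v ^ r ≤ ∑ v, x v ^ r := by
      have h1 : ∀ j ∈ range n, ∑ v ∈ lpE e j, lpW e v j * x v ^ r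
          = ∑ v : Fin N, if v ∈ lpE e j then lpW e v j * x v ^ r else 0 := by
        intro j _
        rw [Finset.sum_ite_mem, univ_inter]
      rw [Finset.sum_congr rfl h1, Finset.sum_comm]
      apply Finset.sum_le_sum
      intro v _
      calc ∑ j ∈ range n, (if v ∈ lpE e j then lpW e v j * x v ^ r else 0)
          = ∑ j ∈ (range n).filter (fun j => v ∈ lpE e j), lpW e v j * x v ^ r := by
            rw [Finset.sum_filter]
        _ = (∑ j ∈ (range n).filter (fun j => v ∈ lpE e j), lpW e v j) * x v ^ r := by
            rw [Finset.sum_mul]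
        _ ≤ x v ^ r := mul_le_of_le_one_left (pow_nonneg (hx0 v) r) (lpDeg e hfar' v)
    -- put everything together
    have hfact : (Nat.factorial r : ℝ) = (r:ℝ) * (Nat.factorial (r-1) : ℝ) := by
      have h : Nat.factorial r = r * Nat.factorial (r-1) := by
        conv_lhs => rw [show r = (r-1)+1 by omega]
        rw [Nat.factorial_succ, show (r-1)+1 = r by omega]
      exact_mod_cast h
    calc (Nat.factorial r : ℝ) * (∑ s ∈ E, ∏ v ∈ s, x v)
        = (Nat.factorial r : ℝ) * ∑ j ∈ range n, ∏ v ∈ lpE e j, x v := by rw [hsum1]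
      _ ≤ (Nat.factorial r : ℝ) *
          ∑ j ∈ range n, c * ((r:ℝ)⁻¹ * ∑ v ∈ lpE e j, lpW e v j * x v ^ r) := by
          apply mul_le_mul_of_nonneg_left (Finset.sum_le_sum hedge) (by positivity)
      _ = (Nat.factorial r : ℝ) * (r:ℝ)⁻¹ * c *
          ∑ j ∈ range n, ∑ v ∈ lpE e j, lpW e v j * x v ^ r := by
          simp only [← mul_sum]; ring
      _ ≤ (Nat.factorial r : ℝ) * (r:ℝ)⁻¹ * c * ∑ v, x v ^ r := by
          apply mul_le_mul_of_nonneg_left hswap (by positivity)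
      _ = (Nat.factorial (r-1) : ℝ) * c * ∑ v, x v ^ r := by
          rw [hfact]; field_simp
  · have h14 : (lpAl n)⁻¹ < 4 := by
      rw [inv_lt_comm₀ hαpos (by norm_num : (0:ℝ) < 4)]
      have := lpAl_gt n
      linarith
    have hfpos : (0:ℝ) < (Nat.factorial (r-1) : ℝ) := by
      exact_mod_cast Nat.factorial_pos (r-1)
    exact mul_lt_mul_of_pos_left
      (Real.rpow_lt_rpow (by positivity) h14 (by positivity)) hfpos
end

section
/- For every r ≥ 2, lim_{n→∞} ρ(A_n^{(r)}) = (r−1)!·4^{1/r}, where A_n^{(r)} is the r-uniform loose path with n edges. Moreover (1 + 2/n + 1/n²)^{−1/r}·(r−1)!·4^{1/r} ≤ ρ(A_n^{(r)}) < (r−1)!·4^{1/r} for all n. -/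
/-!
Upper bound: weighted AM-GM on an edge `e` with weights `1 / deg v` gives
`r ∏_{v ∈ e} x_v ≤ (∏_{v ∈ e} deg v)^{1/r} ∑_{v ∈ e} x_v^r / deg v`. Summed over the edges, the
right-hand sides count every `x_v^r` exactly once, and in a loose path the degree product of an
edge is at most `4`. Equality would force equality on every edge; the first edge has degree
product at most `2`, so `x` vanishes on it, and then, through the shared vertices, edge by edge on
the whole path. As the supremum defining `ρ` is attained, the bound `ρ < (r-1)! 4^{1/r}` is strict.

Lower bound: the test vector equal to `y = (2n/(n+1))^{1/r}` on the `n + 1` intersection and end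
vertices and `1` elsewhere has every edge product equal to `y^2`, and by inclusion-exclusion over
consecutive edges `∑ x_v^r = (n+1) y^r + n (r-2) = n r`.
-/

open Finset Filter Topology

section LoosePath

variable {V : Type*} {r n : ℕ} {g : ℕ → Finset V} {s : ℕ → V}

/-- The `n + 1` intersection and end vertices of the path `g`, in order along it. -/
structure IsSpine (n : ℕ) (g : ℕ → Finset V) (s : ℕ → V) : Prop where
  mem_iff : ∀ k ≤ n, ∀ i < n, s k ∈ g i ↔ i = k ∨ i + 1 = k
  ne_succ : ∀ i < n, s i ≠ s (i + 1)

lemma IsSpine.of_mem_iff (hn : 2 ≤ n) (h : ∀ k ≤ n, ∀ i < n, s k ∈ g i ↔ i = k ∨ i + 1 = k) :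
    IsSpine n g s := by
  refine ⟨h, fun i hi heq => ?_⟩
  by_cases hi0 : i = 0
  · subst hi0
    have h1 := (h 1 (by omega) 1 (by omega)).mpr (Or.inl rfl)
    rw [← heq, h 0 (by omega) 1 (by omega)] at h1
    omega
  · have h1 := (h i (by omega) (i - 1) (by omega)).mpr (Or.inr (by omega))
    rw [heq, h (i + 1) (by omega) (i - 1) (by omega)] at h1
    omega

variable [DecidableEq V]

/-- The edges are `g 0, …, g (n - 1)`; the values of `g` from `n` on play no role. -/
structure IsLoosePath (r n : ℕ) (g : ℕ → Finset V) : Prop where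
  card_eq : ∀ i < n, (g i).card = r
  card_inter_succ : ∀ i, i + 1 < n → (g i ∩ g (i + 1)).card = 1
  disjoint : ∀ i j, i + 2 ≤ j → j < n → Disjoint (g i) (g j)
  exists_mem : ∀ v, ∃ i < n, v ∈ g i

def degree (n : ℕ) (g : ℕ → Finset V) (v : V) : ℕ := #{i ∈ range n | v ∈ g i}

namespace IsLoosePath

lemma le_succ_of_mem (hP : IsLoosePath r n g) {v : V} {i j : ℕ} (hi : v ∈ g i) (hj : v ∈ g j)
    (hin : i < n) : i ≤ j + 1 := by
  by_contra! h
  exact disjoint_left.mp (hP.disjoint j i (by omega) hin) hj hi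

lemma degree_pos (hP : IsLoosePath r n g) (v : V) : 0 < degree n g v := by
  obtain ⟨i, hi, hv⟩ := hP.exists_mem v
  exact card_pos.mpr ⟨i, by simp [hi, hv]⟩

lemma exists_spine_of_eq_one (hP : IsLoosePath r 1 g) (hr : 2 ≤ r) : ∃ s, IsSpine 1 g s := by
  obtain ⟨a, ha, b, hb, hab⟩ := one_lt_card.mp (by rw [hP.card_eq 0 one_pos]; omega)
  refine ⟨fun k => if k = 0 then a else b, fun k hk i hi => ?_, fun i hi => ?_⟩
  · obtain rfl : i = 0 := by omega
    interval_cases k <;> simp [ha, hb]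
  · obtain rfl : i = 0 := by omega
    simpa using hab

lemma exists_spine_of_two_le (hP : IsLoosePath r n g) (hr : 2 ≤ r) (hn : 2 ≤ n) :
    ∃ s, IsSpine n g s := by
  have end_vertex : ∀ i j, i < n → (g i ∩ g j).card ≤ 1 → ∃ v ∈ g i, v ∉ g j := by
    intro i j hi h
    obtain ⟨v, hv, hv'⟩ := exists_mem_notMem_of_card_lt_card (s := g i ∩ g j) (t := g i)
      (by rw [hP.card_eq i hi]; omega)
    exact ⟨v, hv, fun h => hv' (mem_inter.mpr ⟨hv, h⟩)⟩
  obtain ⟨p, hp⟩ := end_vertex 0 1 (by omega) (hP.card_inter_succ 0 hn).le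
  obtain ⟨q, hq⟩ := end_vertex (n - 1) (n - 2) (by omega)
    (by rw [inter_comm, show n - 1 = n - 2 + 1 by omega, hP.card_inter_succ _ (by omega)])
  choose c hc using fun j => show ∃ v, j + 1 < n → v ∈ g j ∩ g (j + 1) from
    if h : j + 1 < n then (card_pos.mp (by rw [hP.card_inter_succ j h]; omega)).imp fun _ hv _ => hv
    else ⟨p, fun h' => absurd h' h⟩
  simp only [mem_inter] at hc
  refine ⟨fun k => if k = 0 then p else if k < n then c (k - 1) else q,
    IsSpine.of_mem_iff hn fun k hk i hi => ?_⟩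
  split_ifs with h0 hkn
  · subst h0
    refine ⟨fun h => ?_, by rintro (rfl | h) <;> [exact hp.1; omega]⟩
    have := hP.le_succ_of_mem h hp.1 hi
    obtain rfl | rfl : i = 0 ∨ i = 1 := by omega
    exacts [Or.inl rfl, absurd h hp.2]
  · obtain ⟨h1, h2⟩ := hc (k - 1) (by omega)
    rw [show k - 1 + 1 = k by omega] at h2
    refine ⟨fun h => ?_, by rintro (rfl | rfl) <;> simpa⟩
    have := hP.le_succ_of_mem h h1 hi
    have := hP.le_succ_of_mem h2 h hkn
    omega
  · rw [show k = n by omega]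
    refine ⟨fun h => ?_, fun h => ?_⟩
    · have := hP.le_succ_of_mem hq.1 h (by omega)
      have : i ≠ n - 2 := fun h' => hq.2 (h' ▸ h)
      omega
    · rw [show i = n - 1 by omega]
      exact hq.1

lemma exists_spine (hP : IsLoosePath r n g) (hr : 2 ≤ r) (hn : 1 ≤ n) : ∃ s, IsSpine n g s := by
  obtain rfl | hn := hn.eq_or_lt
  exacts [hP.exists_spine_of_eq_one hr, hP.exists_spine_of_two_le hr hn]

lemma injOn (hP : IsLoosePath r n g) (hr : 2 ≤ r) (hn : 1 ≤ n) : Set.InjOn g (range n) := by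
  obtain ⟨s, hs⟩ := hP.exists_spine hr hn
  intro i hi j hj hij
  simp only [coe_range, Set.mem_Iio] at hi hj
  have hi' := (hs.mem_iff i hi.le j hj).mp (hij ▸ (hs.mem_iff i hi.le i hi).mpr (Or.inl rfl))
  have hj' := (hs.mem_iff j hj.le i hi).mp (hij ▸ (hs.mem_iff j hj.le j hj).mpr (Or.inl rfl))
  omega

end IsLoosePath

namespace IsSpine

lemma inter_image_eq (hs : IsSpine n g s) {i : ℕ} (hi : i < n) :
    g i ∩ (range (n + 1)).image s = {s i, s (i + 1)} := by
  ext v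
  simp only [mem_inter, mem_image, mem_range, mem_insert, mem_singleton]
  constructor
  · rintro ⟨hv, k, hk, rfl⟩
    rcases (hs.mem_iff k (by omega) i hi).mp hv with rfl | rfl <;> simp
  · rintro (rfl | rfl)
    · exact ⟨(hs.mem_iff i hi.le i hi).mpr (Or.inl rfl), i, by omega, rfl⟩
    · exact ⟨(hs.mem_iff (i + 1) hi i hi).mpr (Or.inr rfl), i + 1, by omega, rfl⟩

lemma card_inter_image (hs : IsSpine n g s) {i : ℕ} (hi : i < n) :
    (g i ∩ (range (n + 1)).image s).card = 2 := by
  rw [hs.inter_image_eq hi, card_pair (hs.ne_succ i hi)]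

lemma inter_succ_eq (hP : IsLoosePath r n g) (hs : IsSpine n g s) {j : ℕ} (hj : j + 1 < n) :
    g j ∩ g (j + 1) = {s (j + 1)} := by
  refine (eq_of_subset_of_card_le (singleton_subset_iff.mpr ?_) ?_).symm
  · exact mem_inter.mpr ⟨(hs.mem_iff _ hj.le j (by omega)).mpr (Or.inr rfl),
      (hs.mem_iff _ hj.le _ hj).mpr (Or.inl rfl)⟩
  · rw [hP.card_inter_succ j hj, card_singleton]

lemma degree_eq_one (hP : IsLoosePath r n g) (hs : IsSpine n g s) {v : V}
    (hv : v ∉ (range (n + 1)).image s) : degree n g v = 1 := by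
  refine le_antisymm (card_le_one.mpr fun a ha b hb => ?_) (hP.degree_pos v)
  simp only [mem_filter, mem_range] at ha hb
  have not_joint : ∀ j, j + 1 < n → v ∈ g j → v ∉ g (j + 1) := by
    intro j hj h h'
    have hjoint : v ∈ g j ∩ g (j + 1) := mem_inter.mpr ⟨h, h'⟩
    rw [hs.inter_succ_eq hP hj, mem_singleton] at hjoint
    exact hv (mem_image.mpr ⟨j + 1, mem_range.mpr (by omega), hjoint.symm⟩)
  have := hP.le_succ_of_mem ha.2 hb.2 ha.1
  have := hP.le_succ_of_mem hb.2 ha.2 hb.1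
  rcases (show a = b ∨ b = a + 1 ∨ a = b + 1 by omega) with h | rfl | rfl
  · exact h
  · exact absurd hb.2 (not_joint a hb.1 ha.2)
  · exact absurd ha.2 (not_joint b ha.1 hb.2)

lemma degree_le_two (hs : IsSpine n g s) {k : ℕ} (hk : k ≤ n) : degree n g (s k) ≤ 2 := by
  refine (card_le_card fun i hi => ?_).trans (card_le_two (a := k - 1) (b := k))
  simp only [mem_filter, mem_range] at hi
  rcases (hs.mem_iff k hk i hi.1).mp hi.2 with rfl | rfl <;> simp

lemma degree_zero_le_one (hs : IsSpine n g s) : degree n g (s 0) ≤ 1 := by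
  refine (card_le_card fun i hi => ?_).trans (card_singleton 0).le
  simp only [mem_filter, mem_range] at hi
  have := (hs.mem_iff 0 (by omega) i hi.1).mp hi.2
  simp only [mem_singleton]
  omega

lemma prod_degree_eq (hP : IsLoosePath r n g) (hs : IsSpine n g s) {i : ℕ} (hi : i < n) :
    ∏ v ∈ g i, degree n g v = degree n g (s i) * degree n g (s (i + 1)) := by
  rw [← prod_subset inter_subset_left fun v hv hvS => hs.degree_eq_one hP fun h => hvS
    (mem_inter.mpr ⟨hv, h⟩), hs.inter_image_eq hi, prod_pair (hs.ne_succ i hi)]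

end IsSpine

end LoosePath

section Counting

variable {V : Type*} [DecidableEq V] {M : Type*} [AddCommMonoid M] {r n : ℕ}
  {g : ℕ → Finset V}

lemma sum_sum_eq_sum_degree_smul [Fintype V] (f : V → M) :
    ∑ i ∈ range n, ∑ v ∈ g i, f v = ∑ v, degree n g v • f v := by
  rw [sum_comm' (t' := univ) (s' := fun v => {i ∈ range n | v ∈ g i}) (by simp)]
  simp [degree]

lemma IsLoosePath.sum_sum_div_degree [Fintype V] (hP : IsLoosePath r n g) (h : V → ℝ) :
    ∑ i ∈ range n, ∑ v ∈ g i, h v / degree n g v = ∑ v, h v := by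
  rw [sum_sum_eq_sum_degree_smul]
  refine sum_congr rfl fun v _ => ?_
  have := (Nat.cast_pos (α := ℝ)).mpr (hP.degree_pos v)
  rw [nsmul_eq_mul]
  field_simp

lemma sum_biUnion_range_add_sum_inter_succ (f : V → M) :
    ∀ m, (∀ i j, i + 2 ≤ j → j ≤ m → Disjoint (g i) (g j)) →
      ∑ v ∈ (range (m + 1)).biUnion g, f v + ∑ j ∈ range m, ∑ v ∈ g j ∩ g (j + 1), f v
        = ∑ i ∈ range (m + 1), ∑ v ∈ g i, f v
  | 0, _ => by simp
  | m + 1, hfar => by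
    have hinter : g (m + 1) ∩ (range (m + 1)).biUnion g = g m ∩ g (m + 1) := by
      ext v
      simp only [mem_inter, mem_biUnion, mem_range]
      refine ⟨fun ⟨hv, i, hi, hvi⟩ => ?_, fun ⟨hvm, hv⟩ => ⟨hv, m, by omega, hvm⟩⟩
      obtain rfl : i = m := by
        by_contra hne
        exact disjoint_left.mp (hfar i (m + 1) (by omega) le_rfl) hvi hv
      exact ⟨hvi, hv⟩
    have hunion := sum_union_inter (s₁ := g (m + 1)) (s₂ := (range (m + 1)).biUnion g) (f := f)
    rw [hinter] at hunion
    rw [sum_range_succ _ (m + 1), range_add_one (n := m + 1), biUnion_insert, sum_range_succ,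
      ← sum_biUnion_range_add_sum_inter_succ f m fun i j h hj => hfar i j h (by omega)]
    calc _ = (∑ v ∈ g (m + 1) ∪ (range (m + 1)).biUnion g, f v + ∑ v ∈ g m ∩ g (m + 1), f v)
          + ∑ j ∈ range m, ∑ v ∈ g j ∩ g (j + 1), f v := by abel
      _ = _ := by rw [hunion]; abel

lemma IsLoosePath.sum_add_sum_inter_succ [Fintype V] (hP : IsLoosePath r n g) (hn : 1 ≤ n)
    (f : V → M) :
    ∑ v, f v + ∑ j ∈ range (n - 1), ∑ v ∈ g j ∩ g (j + 1), f v = ∑ i ∈ range n, ∑ v ∈ g i, f v := by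
  obtain ⟨m, rfl⟩ : ∃ m, n = m + 1 := ⟨n - 1, by omega⟩
  have huniv : (range (m + 1)).biUnion g = univ := eq_univ_of_forall fun v => by
    obtain ⟨i, hi, hv⟩ := hP.exists_mem v
    exact mem_biUnion.mpr ⟨i, mem_range.mpr hi, hv⟩
  rw [← sum_biUnion_range_add_sum_inter_succ f m fun i j h hj => hP.disjoint i j h (by omega),
    huniv, Nat.add_sub_cancel]

end Counting

lemma card_mul_prod_le_prod_rpow_mul_sum {ι : Type*} (t : Finset ι) {r : ℕ} (ht : t.card = r)
    (hr : r ≠ 0) {x d : ι → ℝ} (hx : ∀ i ∈ t, 0 ≤ x i) (hd : ∀ i ∈ t, 0 < d i) :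
    r * ∏ i ∈ t, x i ≤ (∏ i ∈ t, d i) ^ ((1 : ℝ) / r) * ∑ i ∈ t, x i ^ r / d i := by
  have hr' : (0 : ℝ) < r := by positivity
  have amgm := Real.geom_mean_le_arith_mean_weighted t (fun _ => (1 : ℝ) / r)
    (fun i => x i ^ r / d i) (fun _ _ => by positivity) (by simp [ht]; field_simp)
    (fun i hi => div_nonneg (pow_nonneg (hx i hi) r) (hd i hi).le)
  have hroot : ∀ i ∈ t, (x i ^ r / d i) ^ ((1 : ℝ) / r) = x i / d i ^ ((1 : ℝ) / r) := by
    intro i hi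
    rw [Real.div_rpow (pow_nonneg (hx i hi) r) (hd i hi).le, one_div,
      Real.pow_rpow_inv_natCast (hx i hi) hr]
  rw [prod_congr rfl hroot, prod_div_distrib, Real.finsetProd_rpow t d fun i hi => (hd i hi).le,
    ← mul_sum, div_le_iff₀ (by have := prod_pos hd; positivity)] at amgm
  calc (r : ℝ) * ∏ i ∈ t, x i
      ≤ r * ((1 / r * ∑ i ∈ t, x i ^ r / d i) * (∏ i ∈ t, d i) ^ ((1 : ℝ) / r)) :=
        mul_le_mul_of_nonneg_left amgm hr'.le
    _ = _ := by rw [← mul_assoc, ← mul_assoc, mul_one_div_cancel hr'.ne', one_mul, mul_comm]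

namespace IsLoosePath

variable {V : Type*} [DecidableEq V] {r n : ℕ} {g : ℕ → Finset V}

lemma eq_zero_of_sum_pow_div_degree_eq_zero (hP : IsLoosePath r n g) (hr : r ≠ 0) {x : V → ℝ}
    (hx : ∀ v, 0 ≤ x v) {i : ℕ} (h : ∑ v ∈ g i, x v ^ r / degree n g v = 0) :
    ∀ v ∈ g i, x v = 0 := by
  intro v hv
  have := (sum_eq_zero_iff_of_nonneg fun v _ =>
    div_nonneg (pow_nonneg (hx v) r) (Nat.cast_nonneg _)).mp h v hv
  simpa [hr, (hP.degree_pos v).ne'] using this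

lemma eq_zero_of_mul_prod_eq {s : ℕ → V} (hP : IsLoosePath r n g) (hs : IsSpine n g s)
    (hr : r ≠ 0) {x : V → ℝ} (hx : ∀ v, 0 ≤ x v) {c : ℝ} (hc : c ≠ 0)
    (htight : ∀ i < n, r * ∏ v ∈ g i, x v = c * ∑ v ∈ g i, x v ^ r / degree n g v)
    (h0 : ∑ v ∈ g 0, x v ^ r / degree n g v = 0) : x = 0 := by
  have hvanish : ∀ i < n, ∑ v ∈ g i, x v ^ r / degree n g v = 0 := by
    intro i hi
    induction i with
    | zero => exact h0
    | succ i ih =>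
      have hjoint := hP.eq_zero_of_sum_pow_div_degree_eq_zero hr hx (ih (by omega))
        (s (i + 1)) ((hs.mem_iff _ hi.le i (by omega)).mpr (Or.inr rfl))
      have hprod : ∏ v ∈ g (i + 1), x v = 0 :=
        prod_eq_zero ((hs.mem_iff _ hi.le _ hi).mpr (Or.inl rfl)) hjoint
      have := htight (i + 1) hi
      rw [hprod, mul_zero, eq_comm, mul_eq_zero] at this
      exact this.resolve_left hc
  funext v
  obtain ⟨i, hi, hv⟩ := hP.exists_mem v
  exact hP.eq_zero_of_sum_pow_div_degree_eq_zero hr hx (hvanish i hi) v hv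

theorem mul_sum_prod_lt [Fintype V] (hP : IsLoosePath r n g) (hr : 2 ≤ r) (hn : 1 ≤ n) {x : V → ℝ}
    (hx : ∀ v, 0 ≤ x v) (hx0 : x ≠ 0) :
    r * ∑ i ∈ range n, ∏ v ∈ g i, x v < 4 ^ ((1 : ℝ) / r) * ∑ v, x v ^ r := by
  obtain ⟨s, hs⟩ := hP.exists_spine hr hn
  set A : ℕ → ℝ := fun i => ∑ v ∈ g i, x v ^ r / degree n g v
  have hA : ∀ i, 0 ≤ A i := fun i => sum_nonneg fun v _ =>
    div_nonneg (pow_nonneg (hx v) r) (Nat.cast_nonneg _)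
  have hedge : ∀ i < n, r * ∏ v ∈ g i, x v
      ≤ ((degree n g (s i) * degree n g (s (i + 1)) : ℕ) : ℝ) ^ ((1 : ℝ) / r) * A i := by
    intro i hi
    rw [← hs.prod_degree_eq hP hi, Nat.cast_prod]
    exact card_mul_prod_le_prod_rpow_mul_sum _ (hP.card_eq i hi) (by omega) (fun v _ => hx v)
      fun v _ => Nat.cast_pos.mpr (hP.degree_pos v)
  have hedge_le : ∀ i < n, r * ∏ v ∈ g i, x v ≤ 4 ^ ((1 : ℝ) / r) * A i := by
    intro i hi
    refine (hedge i hi).trans (mul_le_mul_of_nonneg_right ?_ (hA i))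
    gcongr
    exact_mod_cast Nat.mul_le_mul (hs.degree_le_two hi.le) (hs.degree_le_two hi)
  have hedge_zero : r * ∏ v ∈ g 0, x v ≤ 2 ^ ((1 : ℝ) / r) * A 0 := by
    refine (hedge 0 hn).trans (mul_le_mul_of_nonneg_right ?_ (hA 0))
    gcongr
    exact_mod_cast Nat.mul_le_mul hs.degree_zero_le_one (hs.degree_le_two hn)
  by_contra! hge
  have htight : ∀ i < n, r * ∏ v ∈ g i, x v = 4 ^ ((1 : ℝ) / r) * A i := by
    refine fun i hi => (sum_eq_sum_iff_of_le fun i hi => hedge_le i (mem_range.mp hi)).mp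
      (le_antisymm (sum_le_sum fun i hi => hedge_le i (mem_range.mp hi)) ?_) i (mem_range.mpr hi)
    rwa [← mul_sum, ← mul_sum, hP.sum_sum_div_degree]
  have h24 : (2 : ℝ) ^ ((1 : ℝ) / r) < 4 ^ ((1 : ℝ) / r) := by
    gcongr
    norm_num
  refine hx0 (hP.eq_zero_of_mul_prod_eq hs (by omega) hx (by positivity) htight ?_)
  nlinarith [htight 0 hn, hedge_zero, h24, hA 0]

end IsLoosePath

namespace IsSpine

variable {V : Type*} [DecidableEq V] {r n : ℕ} {g : ℕ → Finset V} {s : ℕ → V}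

lemma sum_prod_ite (hs : IsSpine n g s) (y : ℝ) :
    ∑ i ∈ range n, ∏ v ∈ g i, (if v ∈ (range (n + 1)).image s then y else 1) = n * y ^ 2 := by
  rw [sum_congr rfl fun i hi => by
    rw [prod_ite_mem, prod_const, hs.card_inter_image (mem_range.mp hi)],
    sum_const, card_range, nsmul_eq_mul]

lemma sum_ite_pow [Fintype V] (hP : IsLoosePath r n g) (hs : IsSpine n g s) (hr : 2 ≤ r)
    (hn : 1 ≤ n) (y : ℝ) :
    ∑ v, (if v ∈ (range (n + 1)).image s then y else 1) ^ r = (n + 1) * y ^ r + n * (r - 2) := by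
  have hedge : ∀ i ∈ range n,
      ∑ v ∈ g i, (if v ∈ (range (n + 1)).image s then y else 1) ^ r = 2 * y ^ r + (r - 2) := by
    intro i hi
    have hcard := card_sdiff_add_card_inter (g i) ((range (n + 1)).image s)
    rw [hP.card_eq i (mem_range.mp hi), hs.card_inter_image (mem_range.mp hi)] at hcard
    simp only [ite_pow, one_pow]
    rw [sum_ite, filter_mem_eq_inter, filter_notMem_eq_sdiff, sum_const, sum_const,
      hs.card_inter_image (mem_range.mp hi), show (g i \ _).card = r - 2 by omega]
    simp only [nsmul_eq_mul, mul_one, Nat.cast_sub hr, Nat.cast_ofNat]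
  have hjoint : ∀ j ∈ range (n - 1),
      ∑ v ∈ g j ∩ g (j + 1), (if v ∈ (range (n + 1)).image s then y else 1) ^ r = y ^ r := by
    intro j hj
    rw [hs.inter_succ_eq hP (by have := mem_range.mp hj; omega), sum_singleton,
      if_pos (mem_image_of_mem s (mem_range.mpr (by have := mem_range.mp hj; omega)))]
  have := hP.sum_add_sum_inter_succ hn fun v => (if v ∈ (range (n + 1)).image s then y else 1) ^ r
  rw [sum_congr rfl hjoint, sum_congr rfl hedge, sum_const, sum_const, card_range, card_range,
    nsmul_eq_mul, nsmul_eq_mul, Nat.cast_sub hn] at this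
  push_cast at this
  linarith

end IsSpine

theorem IsLoosePath.exists_mul_sum_prod_eq {V : Type*} [Fintype V] [DecidableEq V] {r n : ℕ}
    {g : ℕ → Finset V} (hP : IsLoosePath r n g) (hr : 2 ≤ r) (hn : 1 ≤ n) :
    ∃ x : V → ℝ, (∀ v, 0 ≤ x v) ∧ x ≠ 0 ∧
      r * ∑ i ∈ range n, ∏ v ∈ g i, x v
        = ((2 * n / (n + 1) : ℝ) ^ ((1 : ℝ) / r)) ^ 2 * ∑ v, x v ^ r := by
  obtain ⟨s, hs⟩ := hP.exists_spine hr hn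
  have hyr : ((2 * n / (n + 1) : ℝ) ^ ((1 : ℝ) / r)) ^ r = 2 * n / (n + 1) := by
    rw [one_div, Real.rpow_inv_natCast_pow (by positivity) (by omega)]
  set y : ℝ := (2 * n / (n + 1) : ℝ) ^ ((1 : ℝ) / r)
  have hy : 0 < y := by positivity
  refine ⟨fun v => if v ∈ (range (n + 1)).image s then y else 1,
    fun v => by dsimp only; split_ifs <;> positivity, fun h => ?_, ?_⟩
  · have := congrFun h (s 0)
    simp only [mem_image_of_mem s (mem_range.mpr (Nat.succ_pos n)), if_true, Pi.zero_apply] at this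
    exact hy.ne' this
  · rw [hs.sum_prod_ite, hs.sum_ite_pow hP hr hn, hyr]
    field_simp
    ring

section SpectralRadius

lemma sum_pow_pos {V : Type*} [Fintype V] {x : V → ℝ} (hx : ∀ v, 0 ≤ x v) (hx0 : x ≠ 0) (r : ℕ) :
    0 < ∑ v, x v ^ r := by
  obtain ⟨v, hv⟩ := Function.ne_iff.mp hx0
  exact sum_pos' (fun w _ => pow_nonneg (hx w) r) ⟨v, mem_univ v, pow_pos ((hx v).lt_of_ne' hv) r⟩

lemma sum_prod_const_mul {V : Type*} {r : ℕ} {E : Finset (Finset V)} (hE : ∀ f ∈ E, f.card = r)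
    (c : ℝ) (x : V → ℝ) : ∑ f ∈ E, ∏ v ∈ f, c * x v = c ^ r * ∑ f ∈ E, ∏ v ∈ f, x v := by
  rw [mul_sum]
  exact sum_congr rfl fun f hf => by rw [prod_mul_distrib, prod_const, hE f hf]

variable {V : Type} [Fintype V]

lemma isCompact_nonneg_sum_pow_eq_one {r : ℕ} (hr : r ≠ 0) :
    IsCompact {x : V → ℝ | (∀ v, 0 ≤ x v) ∧ ∑ v, x v ^ r = 1} := by
  refine (isCompact_univ_pi fun _ => isCompact_Icc (a := (0 : ℝ)) (b := 1)).of_isClosed_subset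
    ((isClosed_le continuous_const continuous_id).inter (isClosed_eq (by fun_prop)
      continuous_const)) fun x ⟨hx, hsum⟩ v _ => ⟨hx v, ?_⟩
  refine (pow_le_one_iff_of_nonneg (hx v) hr).mp ?_
  exact hsum ▸ single_le_sum (fun w _ => pow_nonneg (hx w) r) (mem_univ v)

/-- The Rayleigh quotient is homogeneous of degree `0`, so its supremum is its maximum on the
compact set `{x ≥ 0, ∑ x ^ r = 1}`. -/
theorem isGreatest_specRad [Nonempty V] {r : ℕ} (hr : r ≠ 0) {E : Finset (Finset V)}
    (hE : ∀ f ∈ E, f.card = r) :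
    IsGreatest {ρ : ℝ | ∃ x : V → ℝ, (∀ v, 0 ≤ x v) ∧ x ≠ 0 ∧
      ρ = (Nat.factorial r : ℝ) * (∑ e ∈ E, ∏ v ∈ e, x v) / (∑ v, x v ^ r)} (specRad r E) := by
  set K := {x : V → ℝ | (∀ v, 0 ≤ x v) ∧ ∑ v, x v ^ r = 1}
  set F : (V → ℝ) → ℝ := fun x => (Nat.factorial r : ℝ) * ∑ e ∈ E, ∏ v ∈ e, x v
  have hset : {ρ : ℝ | ∃ x : V → ℝ, (∀ v, 0 ≤ x v) ∧ x ≠ 0 ∧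
      ρ = (Nat.factorial r : ℝ) * (∑ e ∈ E, ∏ v ∈ e, x v) / (∑ v, x v ^ r)} = F '' K := by
    ext ρ
    constructor
    · rintro ⟨x, hx, hx0, rfl⟩
      have hpos := sum_pow_pos hx hx0 r
      set c := ((∑ v, x v ^ r) ^ ((1 : ℝ) / r))⁻¹
      have hcr : c ^ r = (∑ v, x v ^ r)⁻¹ := by
        rw [inv_pow, one_div, Real.rpow_inv_natCast_pow hpos.le hr]
      refine ⟨fun v => c * x v, ⟨fun v => mul_nonneg (by positivity) (hx v), ?_⟩, ?_⟩
      · simp only [mul_pow, ← mul_sum, hcr, inv_mul_cancel₀ hpos.ne']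
      · simp only [F, sum_prod_const_mul hE, hcr]
        ring
    · rintro ⟨x, ⟨hx, hsum⟩, rfl⟩
      refine ⟨x, hx, fun h => ?_, by rw [hsum, div_one]⟩
      simp [h, zero_pow hr] at hsum
  have hK : K.Nonempty := by
    classical
    obtain ⟨v₀⟩ := ‹Nonempty V›
    exact ⟨Pi.single v₀ 1, fun v => by by_cases h : v = v₀ <;> simp [h], by
      simp [apply_ite (· ^ r), Pi.single_apply, zero_pow hr]⟩
  rw [specRad, hset]
  exact ((isCompact_nonneg_sum_pow_eq_one hr).image (by fun_prop)).isGreatest_sSup (hK.image F)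

namespace IsLoosePath

variable [DecidableEq V] {r n : ℕ} {g : ℕ → Finset V}

lemma isGreatest_specRad (hP : IsLoosePath r n g) (hr : 2 ≤ r) (hn : 1 ≤ n) :
    IsGreatest {ρ : ℝ | ∃ x : V → ℝ, (∀ v, 0 ≤ x v) ∧ x ≠ 0 ∧
      ρ = (Nat.factorial r : ℝ) * (∑ i ∈ range n, ∏ v ∈ g i, x v) / (∑ v, x v ^ r)}
      (specRad r ((range n).image g)) := by
  obtain ⟨s, hs⟩ := hP.exists_spine hr hn
  have : Nonempty V := ⟨s 0⟩
  have hcard : ∀ f ∈ (range n).image g, f.card = r := by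
    simp only [mem_image, mem_range]
    rintro f ⟨i, hi, rfl⟩
    exact hP.card_eq i hi
  simpa only [sum_image (hP.injOn hr hn)] using _root_.isGreatest_specRad (by omega) hcard

theorem le_specRad (hP : IsLoosePath r n g) (hr : 2 ≤ r) (hn : 1 ≤ n) :
    (Nat.factorial (r - 1) : ℝ) * ((2 * n / (n + 1) : ℝ) ^ ((1 : ℝ) / r)) ^ 2
      ≤ specRad r ((range n).image g) := by
  obtain ⟨x, hx, hx0, heq⟩ := hP.exists_mul_sum_prod_eq hr hn
  refine le_of_eq_of_le ?_ ((hP.isGreatest_specRad hr hn).2 ⟨x, hx, hx0, rfl⟩)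
  rw [← Nat.mul_factorial_pred (by omega : r ≠ 0), Nat.cast_mul, mul_comm (r : ℝ), mul_assoc, heq,
    mul_div_assoc (Nat.factorial (r - 1) : ℝ), mul_div_cancel_right₀ _ (sum_pow_pos hx hx0 r).ne']

theorem specRad_lt (hP : IsLoosePath r n g) (hr : 2 ≤ r) (hn : 1 ≤ n) :
    specRad r ((range n).image g) < (Nat.factorial (r - 1) : ℝ) * 4 ^ ((1 : ℝ) / r) := by
  obtain ⟨x, hx, hx0, hρ⟩ := (hP.isGreatest_specRad hr hn).1
  rw [hρ, div_lt_iff₀ (sum_pow_pos hx hx0 r), ← Nat.mul_factorial_pred (by omega : r ≠ 0),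
    Nat.cast_mul, mul_comm (r : ℝ), mul_assoc, mul_assoc]
  exact mul_lt_mul_of_pos_left (hP.mul_sum_prod_lt hr hn hx hx0) (by positivity)

end IsLoosePath

end SpectralRadius

lemma isLoosePath_of_fin {V : Type*} [DecidableEq V] {r n : ℕ} (e : Fin n → Finset V)
    (hcard : ∀ i, (e i).card = r)
    (hconsec : ∀ i j : Fin n, (i : ℕ) + 1 = (j : ℕ) → (e i ∩ e j).card = 1)
    (hfar : ∀ i j : Fin n, (i : ℕ) + 2 ≤ (j : ℕ) → e i ∩ e j = ∅)
    (hcov : ∀ v, ∃ i, v ∈ e i) :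
    IsLoosePath r n fun i => if h : i < n then e ⟨i, h⟩ else ∅ where
  card_eq i hi := by simpa [hi] using hcard ⟨i, hi⟩
  card_inter_succ i hi := by
    simpa [hi, (by omega : i < n)] using hconsec ⟨i, by omega⟩ ⟨i + 1, hi⟩ rfl
  disjoint i j hij hj := by
    simpa [hj, (by omega : i < n), disjoint_iff_inter_eq_empty] using
      hfar ⟨i, by omega⟩ ⟨j, hj⟩ hij
  exists_mem v := by
    obtain ⟨i, hi⟩ := hcov v
    exact ⟨i, i.2, by simpa using hi⟩

lemma image_range_dite {V : Type*} [DecidableEq V] {n : ℕ} (e : Fin n → Finset V) :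
    (range n).image (fun i => if h : i < n then e ⟨i, h⟩ else ∅) = univ.image e := by
  ext f
  simp only [mem_image, mem_range, mem_univ, true_and]
  constructor
  · rintro ⟨i, hi, rfl⟩
    exact ⟨⟨i, hi⟩, by simp [hi]⟩
  · rintro ⟨i, rfl⟩
    exact ⟨i, i.2, by simp⟩

lemma one_add_two_div_add_one_div_sq_rpow_mul (r : ℕ) {n : ℝ} (hn : 0 < n) :
    (1 + 2 / n + 1 / n ^ 2) ^ (-(1 : ℝ) / r) * 4 ^ ((1 : ℝ) / r)
      = ((2 * n / (n + 1)) ^ ((1 : ℝ) / r)) ^ 2 := by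
  have hsq : 1 + 2 / n + 1 / n ^ 2 = ((n + 1) / n) ^ 2 := by field_simp; ring
  rw [hsq, neg_div, Real.rpow_neg (by positivity), ← Real.inv_rpow (by positivity),
    ← Real.mul_rpow (by positivity) (by norm_num), Real.rpow_pow_comm (by positivity)]
  congr 1
  field_simp
  ring

lemma tendsto_one_add_two_div_add_one_div_sq_rpow_mul (r : ℕ) (C : ℝ) :
    Tendsto (fun n : ℕ => (1 + 2 / (n : ℝ) + 1 / (n : ℝ) ^ 2) ^ (-(1 : ℝ) / r) * C) atTop
      (𝓝 C) := by
  have h : Tendsto (fun n : ℕ => 1 + 2 / (n : ℝ) + 1 / (n : ℝ) ^ 2) atTop (𝓝 1) := by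
    simpa [one_div_pow] using ((tendsto_const_div_atTop_nhds_zero_nat (2 : ℝ)).const_add 1).add
      (tendsto_one_div_atTop_nhds_zero_nat.pow 2)
  simpa using (h.rpow_const (Or.inl one_ne_zero)).mul_const C

theorem loosePath_specRad_tendsto_general (r : ℕ) (hr : 2 ≤ r) (N : ℕ → ℕ)
    (E : ∀ n, Finset (Finset (Fin (N n)))) (e : ∀ n, Fin n → Finset (Fin (N n)))
    (hcard : ∀ n, 1 ≤ n → ∀ i, (e n i).card = r)
    (hE : ∀ n, 1 ≤ n → E n = Finset.image (e n) Finset.univ)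
    (hconsec : ∀ n, 1 ≤ n → ∀ i j : Fin n, (i : ℕ) + 1 = (j : ℕ) → (e n i ∩ e n j).card = 1)
    (hfar : ∀ n, 1 ≤ n → ∀ i j : Fin n, (i : ℕ) + 2 ≤ (j : ℕ) → e n i ∩ e n j = ∅)
    (hcov : ∀ n, 1 ≤ n → ∀ v : Fin (N n), ∃ i, v ∈ e n i) :
    (∀ n : ℕ, 1 ≤ n →
      ((1 + 2 / (n : ℝ) + 1 / (n : ℝ) ^ 2) ^ (-(1 : ℝ) / r)) *
          ((Nat.factorial (r - 1) : ℝ) * (4 : ℝ) ^ ((1 : ℝ) / r)) ≤ specRad r (E n) ∧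
      specRad r (E n) < (Nat.factorial (r - 1) : ℝ) * (4 : ℝ) ^ ((1 : ℝ) / r)) ∧
    Tendsto (fun n => specRad r (E n)) atTop
      (𝓝 ((Nat.factorial (r - 1) : ℝ) * (4 : ℝ) ^ ((1 : ℝ) / r))) := by
  refine (and_iff_left_of_imp fun hbounds => ?_).mpr fun n hn => ?_
  · exact tendsto_of_tendsto_of_tendsto_of_le_of_le'
      (tendsto_one_add_two_div_add_one_div_sq_rpow_mul r _) tendsto_const_nhds
      (eventually_atTop.mpr ⟨1, fun n hn => (hbounds n hn).1⟩)
      (eventually_atTop.mpr ⟨1, fun n hn => (hbounds n hn).2.le⟩)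
  · have hP := isLoosePath_of_fin (e n) (hcard n hn) (hconsec n hn) (hfar n hn) (hcov n hn)
    rw [hE n hn, ← image_range_dite, mul_left_comm,
      one_add_two_div_add_one_div_sq_rpow_mul r (by positivity)]
    exact ⟨hP.le_specRad hr hn, hP.specRad_lt hr hn⟩

/-- for a family of `r`-uniform loose paths `A_n^{(r)}` (`n` edges),
the sandwich bounds `(1 + 2/n + 1/n²)^{-1/r}·(r−1)!·4^{1/r} ≤ ρ(A_n^{(r)}) < (r−1)!·4^{1/r}`
hold for all `n ≥ 1`, and `ρ(A_n^{(r)}) → (r−1)!·4^{1/r}` as `n → ∞`. -/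
theorem loosePath_specRad_tendsto (r : ℕ) (hr : 2 ≤ r) (N : ℕ → ℕ)
    (E : ∀ n, Finset (Finset (Fin (N n)))) (e : ∀ n, Fin n → Finset (Fin (N n)))
    (hcard : ∀ n, 1 ≤ n → ∀ i, (e n i).card = r)
    (hE : ∀ n, 1 ≤ n → E n = Finset.image (e n) Finset.univ)
    (hinj : ∀ n, 1 ≤ n → Function.Injective (e n))
    (hconsec : ∀ n, 1 ≤ n → ∀ i j : Fin n, (i : ℕ) + 1 = (j : ℕ) → (e n i ∩ e n j).card = 1)
    (hfar : ∀ n, 1 ≤ n → ∀ i j : Fin n, (i : ℕ) + 2 ≤ (j : ℕ) → e n i ∩ e n j = ∅)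
    (hcov : ∀ n, 1 ≤ n → ∀ v : Fin (N n), ∃ i, v ∈ e n i) :
    (∀ n : ℕ, 1 ≤ n →
      ((1 + 2 / (n : ℝ) + 1 / (n : ℝ) ^ 2) ^ (-(1 : ℝ) / r)) *
          ((Nat.factorial (r - 1) : ℝ) * (4 : ℝ) ^ ((1 : ℝ) / r)) ≤ specRad r (E n) ∧
      specRad r (E n) < (Nat.factorial (r - 1) : ℝ) * (4 : ℝ) ^ ((1 : ℝ) / r)) ∧
    Tendsto (fun n => specRad r (E n)) atTop
      (𝓝 ((Nat.factorial (r - 1) : ℝ) * (4 : ℝ) ^ ((1 : ℝ) / r))) :=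
  loosePath_specRad_tendsto_general r hr N E e hcard hE hconsec hfar hcov
end

section
/- The r-uniform 2-edge cycle C_2^{(r)} (two r-edges sharing exactly two vertices, r ≥ 3) has spectral radius exactly (r−1)!·4^{1/r}. -/
open Finset

/-!
The upper bound is the labeling method of Lu and Man: if nonnegative weights `B v e` on the
incidences have, at every vertex, total at most `1`, and, along every edge, product at least `α`,
then weighted AM-GM on each edge gives `∏_{v ∈ e} x v ≤ α^(-1/r) · (1/r) ∑_{v ∈ e} B v e · x v ^ r`,
and summing over the edges bounds `ρ` by `(r-1)! · α^(-1/r)`. For `C_2^{(r)}` the labeling `1/2` on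
the two shared vertices and `1` elsewhere has `α = 1/4`. The vector equal to `2^(1/r)` on the shared
vertices and `1` elsewhere makes every AM-GM step an equality and attains the bound.
-/

open Nat

theorem prod_le_rpow_inv_mul_sum_mul_pow {ι : Type*} {s : Finset ι} {r : ℕ} (hr : 0 < r)
    (hs : #s = r) {w x : ι → ℝ} (hw : ∀ i ∈ s, 0 ≤ w i) (hx : ∀ i ∈ s, 0 ≤ x i) {α : ℝ}
    (hα : 0 < α) (hαw : α ≤ ∏ i ∈ s, w i) :
    ∏ i ∈ s, x i ≤ α⁻¹ ^ (r⁻¹ : ℝ) * ((∑ i ∈ s, w i * x i ^ r) / r) := by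
  have hr' : (r : ℝ) ≠ 0 := by positivity
  have amgm : α ^ (r⁻¹ : ℝ) * ∏ i ∈ s, x i ≤ (∑ i ∈ s, w i * x i ^ r) / r :=
    calc α ^ (r⁻¹ : ℝ) * ∏ i ∈ s, x i
        ≤ (∏ i ∈ s, w i) ^ (r⁻¹ : ℝ) * ∏ i ∈ s, x i := by
          gcongr
          exact prod_nonneg hx
      _ = ∏ i ∈ s, (w i * x i ^ r) ^ (r⁻¹ : ℝ) := by
          rw [← Real.finsetProd_rpow s w hw, ← prod_mul_distrib]
          refine prod_congr rfl fun i hi => ?_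
          rw [Real.mul_rpow (hw i hi) (pow_nonneg (hx i hi) r),
            Real.pow_rpow_inv_natCast (hx i hi) hr.ne']
      _ ≤ ∑ i ∈ s, (r : ℝ)⁻¹ * (w i * x i ^ r) :=
          Real.geom_mean_le_arith_mean_weighted s _ _ (fun _ _ => by positivity)
            (by rw [sum_const, hs, nsmul_eq_mul, mul_inv_cancel₀ hr'])
            (fun i hi => mul_nonneg (hw i hi) (pow_nonneg (hx i hi) r))
      _ = (∑ i ∈ s, w i * x i ^ r) / r := by rw [← mul_sum, inv_mul_eq_div]
  calc ∏ i ∈ s, x i = α⁻¹ ^ (r⁻¹ : ℝ) * (α ^ (r⁻¹ : ℝ) * ∏ i ∈ s, x i) := by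
        rw [Real.inv_rpow hα.le, inv_mul_cancel_left₀ (by positivity)]
    _ ≤ _ := by gcongr

section Hypergraph

variable {V : Type} [DecidableEq V]

structure IsSubnormalLabeling (E : Finset (Finset V)) (B : V → Finset V → ℝ) (α : ℝ) : Prop where
  nonneg : ∀ e ∈ E, ∀ v ∈ e, 0 ≤ B v e
  sum_le_one : ∀ v, ∑ e ∈ E with v ∈ e, B v e ≤ 1
  le_prod : ∀ e ∈ E, α ≤ ∏ v ∈ e, B v e

theorem isSubnormalLabeling_pair {e e' : Finset V} (hne : e ≠ e') (hint : #(e ∩ e') = 2) :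
    IsSubnormalLabeling {e, e'} (fun v _ => if v ∈ e ∩ e' then (1 / 2 : ℝ) else 1) (1 / 4) where
  nonneg _ _ _ _ := by split_ifs <;> norm_num
  sum_le_one v := by
    rw [sum_filter, sum_pair hne]
    by_cases hv : v ∈ e <;> by_cases hv' : v ∈ e' <;> norm_num [hv, hv']
  le_prod f hf := by
    have hsub : e ∩ e' ⊆ f := by
      rcases mem_insert.mp hf with rfl | hf
      · exact inter_subset_left
      · rw [mem_singleton.mp hf]; exact inter_subset_right
    rw [prod_ite_mem, inter_eq_right.mpr hsub, prod_const, hint]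
    norm_num

variable [Fintype V]

noncomputable def rayleighQuotient (r : ℕ) (E : Finset (Finset V)) (x : V → ℝ) : ℝ :=
  (r ! : ℝ) * (∑ e ∈ E, ∏ v ∈ e, x v) / ∑ v, x v ^ r

namespace IsSubnormalLabeling

variable {r : ℕ} {E : Finset (Finset V)} {B : V → Finset V → ℝ} {α : ℝ}

theorem sum_prod_le (hB : IsSubnormalLabeling E B α) (hα : 0 < α) (hr : 0 < r)
    (hE : ∀ e ∈ E, #e = r) {x : V → ℝ} (hx : ∀ v, 0 ≤ x v) :
    ∑ e ∈ E, ∏ v ∈ e, x v ≤ α⁻¹ ^ (r⁻¹ : ℝ) * ((∑ v, x v ^ r) / r) := by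
  have hc : 0 ≤ α⁻¹ ^ (r⁻¹ : ℝ) / r := by positivity
  calc ∑ e ∈ E, ∏ v ∈ e, x v
      ≤ ∑ e ∈ E, α⁻¹ ^ (r⁻¹ : ℝ) * ((∑ v ∈ e, B v e * x v ^ r) / r) :=
        sum_le_sum fun e he => prod_le_rpow_inv_mul_sum_mul_pow hr (hE e he) (hB.nonneg e he)
          (fun v _ => hx v) hα (hB.le_prod e he)
    _ = α⁻¹ ^ (r⁻¹ : ℝ) / r * ∑ e ∈ E, ∑ v ∈ e, B v e * x v ^ r := by
        rw [mul_sum]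
        exact sum_congr rfl fun e _ => by ring
    _ = α⁻¹ ^ (r⁻¹ : ℝ) / r * ∑ v, (∑ e ∈ E with v ∈ e, B v e) * x v ^ r := by
        simp_rw [sum_mul]
        exact congrArg _ (sum_comm' fun e v => by simp [and_comm])
    _ ≤ α⁻¹ ^ (r⁻¹ : ℝ) / r * ∑ v, x v ^ r := by
        gcongr with v
        exact mul_le_of_le_one_left (pow_nonneg (hx v) r) (hB.sum_le_one v)
    _ = _ := by ring

theorem rayleighQuotient_le (hB : IsSubnormalLabeling E B α) (hα : 0 < α) (hr : 0 < r)
    (hE : ∀ e ∈ E, #e = r) {x : V → ℝ} (hx : ∀ v, 0 ≤ x v) (hx0 : x ≠ 0) :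
    rayleighQuotient r E x ≤ (r - 1)! * α⁻¹ ^ (r⁻¹ : ℝ) := by
  have hpos : 0 < ∑ v, x v ^ r := by
    obtain ⟨v, hv⟩ := Function.ne_iff.mp hx0
    exact sum_pos' (fun v _ => pow_nonneg (hx v) r)
      ⟨v, mem_univ v, pow_pos ((hx v).lt_of_ne' hv) r⟩
  rw [rayleighQuotient, div_le_iff₀ hpos, ← Nat.mul_factorial_pred hr.ne']
  calc ((r * (r - 1)! : ℕ) : ℝ) * ∑ e ∈ E, ∏ v ∈ e, x v
      ≤ ((r * (r - 1)! : ℕ) : ℝ) * (α⁻¹ ^ (r⁻¹ : ℝ) * ((∑ v, x v ^ r) / r)) := by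
        gcongr
        exact hB.sum_prod_le hα hr hE hx
    _ = _ := by
        push_cast
        field_simp

end IsSubnormalLabeling

theorem rayleighQuotient_pair {r : ℕ} {e e' : Finset V} (hne : e ≠ e') (he : #e = r)
    (he' : #e' = r) (hint : #(e ∩ e') = 2) (hcov : e ∪ e' = univ) :
    rayleighQuotient r {e, e'} (fun v => if v ∈ e ∩ e' then (2 : ℝ) ^ (r⁻¹ : ℝ) else 1) =
      (r - 1)! * 4 ^ (r⁻¹ : ℝ) := by
  have hr : r ≠ 0 := by
    have := card_le_card (inter_subset_left (s₁ := e) (s₂ := e'))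
    omega
  have hprod : ∀ f, e ∩ e' ⊆ f →
      ∏ v ∈ f, (if v ∈ e ∩ e' then (2 : ℝ) ^ (r⁻¹ : ℝ) else 1) = 4 ^ (r⁻¹ : ℝ) := by
    intro f hf
    rw [prod_ite_mem, inter_eq_right.mpr hf, prod_const, hint, sq,
      ← Real.mul_rpow (by norm_num) (by norm_num)]
    norm_num
  have hcard : Fintype.card V + 2 = 2 * r := by
    have := card_union_add_card_inter e e'
    rw [hcov, Finset.card_univ, hint, he, he'] at this
    omega
  have hsum : ∑ v, (if v ∈ e ∩ e' then (2 : ℝ) ^ (r⁻¹ : ℝ) else 1) ^ r = 2 * r := by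
    have hpow : ∀ v, (if v ∈ e ∩ e' then (2 : ℝ) ^ (r⁻¹ : ℝ) else 1) ^ r =
        1 + if v ∈ e ∩ e' then 1 else 0 := by
      intro v
      split_ifs
      · rw [Real.rpow_inv_natCast_pow (by norm_num) hr]; norm_num
      · norm_num
    simp_rw [hpow]
    rw [sum_add_distrib, sum_ite_mem, univ_inter, sum_const, sum_const, hint, Finset.card_univ]
    simp only [nsmul_eq_mul, mul_one]
    exact_mod_cast hcard
  rw [rayleighQuotient, sum_pair hne, hprod e inter_subset_left, hprod e' inter_subset_right,
    hsum, ← Nat.mul_factorial_pred hr]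
  push_cast
  field_simp
  ring

end Hypergraph

theorem twoEdgeCycle_specRad_general (r N : ℕ)
    (e e' : Finset (Fin N)) (he : e.card = r) (he' : e'.card = r) (hne : e ≠ e')
    (hint : (e ∩ e').card = 2) (hcov : e ∪ e' = Finset.univ) :
    specRad r ({e, e'} : Finset (Finset (Fin N))) =
      (Nat.factorial (r - 1) : ℝ) * (4 : ℝ) ^ ((1 : ℝ) / r) := by
  have hr : 0 < r := by
    have := card_le_card (inter_subset_left (s₁ := e) (s₂ := e'))
    omega
  obtain ⟨u, hu⟩ : (e ∩ e').Nonempty := card_pos.mp (by omega)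
  rw [one_div]
  refine IsGreatest.csSup_eq ⟨⟨_, fun v => ?_, fun h0 => ?_,
    (rayleighQuotient_pair hne he he' hint hcov).symm⟩, ?_⟩
  · split_ifs <;> positivity
  · have := congrFun h0 u
    simp only [hu, if_true, Pi.zero_apply] at this
    exact (Real.rpow_pos_of_pos two_pos _).ne' this
  · rintro _ ⟨x, hx, hx0, rfl⟩
    have hE : ∀ f ∈ ({e, e'} : Finset (Finset (Fin N))), #f = r := by simp [he, he']
    have h := (isSubnormalLabeling_pair hne hint).rayleighQuotient_le (by norm_num) hr hE hx hx0
    norm_num at h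
    exact h

/-- the `r`-uniform 2-edge cycle `C_2^{(r)}` (two `r`-edges sharing
exactly two vertices, `r ≥ 3`) has spectral radius exactly `(r−1)!·4^{1/r}`. -/
theorem twoEdgeCycle_specRad (r N : ℕ) (hr : 3 ≤ r)
    (e e' : Finset (Fin N)) (he : e.card = r) (he' : e'.card = r) (hne : e ≠ e')
    (hint : (e ∩ e').card = 2) (hcov : e ∪ e' = Finset.univ) :
    specRad r ({e, e'} : Finset (Finset (Fin N))) =
      (Nat.factorial (r - 1) : ℝ) * (4 : ℝ) ^ ((1 : ℝ) / r) :=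
  twoEdgeCycle_specRad_general r N e e' he he' hne hint hcov
end

section
/- The 3-uniform loose cycle C_n^{(3)} (n ≥ 3 edges, consecutive edges sharing one vertex, arranged cyclically, each edge having one extra leaf) is consistently 1/4-normal with B = 1/2 at all non-leaf incidences and B = 1 at leaf incidences; hence ρ(C_n^{(3)}) = 2·4^{1/3}. -/
open Finset

lemma amgm3 (a b c : ℝ) (ha : 0 ≤ a) (hb : 0 ≤ b) (hc : 0 ≤ c) :
    3 * (a * b * c) ≤ a ^ 3 + b ^ 3 + c ^ 3 := by
  nlinarith [sq_nonneg (a - b), sq_nonneg (b - c), sq_nonneg (a - c),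
    mul_nonneg ha hb, mul_nonneg hb hc, mul_nonneg ha hc,
    add_nonneg (add_nonneg ha hb) hc]

lemma cube_c : ((2:ℝ) ^ ((1:ℝ)/3)) ^ 3 = 2 := by
  rw [← Real.rpow_natCast ((2:ℝ) ^ ((1:ℝ)/3)) 3, ← Real.rpow_mul (by norm_num)]
  norm_num

lemma t_eq_sq : (4:ℝ) ^ ((1:ℝ)/3) = ((2:ℝ) ^ ((1:ℝ)/3)) ^ 2 := by
  rw [← Real.rpow_natCast ((2:ℝ) ^ ((1:ℝ)/3)) 2, ← Real.rpow_mul (by norm_num),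
    show (4:ℝ) = 2 ^ (2:ℝ) by norm_num [Real.rpow_natCast], ← Real.rpow_mul (by norm_num)]
  norm_num

lemma key_ineq (a b c : ℝ) (ha : 0 ≤ a) (hb : 0 ≤ b) (hc : 0 ≤ c) :
    a * b * c ≤ (4:ℝ) ^ ((1:ℝ)/3) / 3 * (a ^ 3 / 2 + b ^ 3 / 2 + c ^ 3) := by
  rw [t_eq_sq]
  set s : ℝ := (2:ℝ) ^ ((1:ℝ)/3) with hs
  have hs0 : 0 < s := Real.rpow_pos_of_pos (by norm_num) _
  have hs3 : s ^ 3 = 2 := cube_c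
  obtain ⟨a', ha', rfl⟩ : ∃ a', 0 ≤ a' ∧ a = s * a' :=
    ⟨a / s, by positivity, by field_simp⟩
  obtain ⟨b', hb', rfl⟩ : ∃ b', 0 ≤ b' ∧ b = s * b' :=
    ⟨b / s, by positivity, by field_simp⟩
  have h := amgm3 a' b' c ha' hb' hc
  have h2 : (0:ℝ) ≤ s ^ 2 / 3 := by positivity
  calc s * a' * (s * b') * c = s ^ 2 / 3 * (3 * (a' * b' * c)) := by ring
    _ ≤ s ^ 2 / 3 * (a' ^ 3 + b' ^ 3 + c ^ 3) := mul_le_mul_of_nonneg_left h h2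
    _ = s ^ 2 / 3 * ((s * a') ^ 3 / 2 + (s * b') ^ 3 / 2 + c ^ 3) := by
        rw [mul_pow, mul_pow, hs3]; ring

lemma fin_one_ne_zero {n : ℕ} [NeZero n] (hn : 3 ≤ n) : (1 : Fin n) ≠ 0 := by
  intro h
  rw [Fin.one_eq_zero_iff] at h; omega

lemma fin_ne_succ {n : ℕ} [NeZero n] (hn : 3 ≤ n) (i : Fin n) : i ≠ i + 1 := by
  intro h
  exact fin_one_ne_zero hn (left_eq_add.mp h)

lemma fin_ne_sub_one {n : ℕ} [NeZero n] (hn : 3 ≤ n) (j : Fin n) : j ≠ j - 1 := by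
  intro h
  have h2 : j + 1 = j := by
    nth_rewrite 1 [h]
    exact sub_add_cancel j 1
  exact fin_ne_succ hn j h2.symm

/-- the 3-uniform loose cycle `C_n^{(3)}` (`n ≥ 3`), with edges
`e_i = {u_i, u_{i+1}, w_i}`, carries the 1/4-normal labeling with value `1/2`
at non-leaf incidences and `1` at leaf incidences; hence `ρ(C_n^{(3)}) = 2·4^{1/3}`. -/
theorem looseCycle3_specRad (n N : ℕ) [NeZero n] (hn : 3 ≤ n)
    (u w : Fin n → Fin N)
    (hu : Function.Injective u) (hw : Function.Injective w)
    (huw : ∀ i j, u i ≠ w j)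
    (E : Finset (Finset (Fin N)))
    (hE : E = Finset.image (fun i : Fin n => ({u i, u (i + 1), w i} : Finset (Fin N)))
      Finset.univ)
    (hcov : ∀ x : Fin N, ∃ f ∈ E, x ∈ f) :
    (∀ x : Fin N, ∑ f ∈ E.filter (fun f => x ∈ f),
        (if x ∈ Finset.image w Finset.univ then (1 : ℝ) else 1/2) = 1) ∧
    (∀ f ∈ E, ∏ x ∈ f, (if x ∈ Finset.image w Finset.univ then (1 : ℝ) else 1/2) = 1/4) ∧
    specRad 3 E = 2 * (4 : ℝ) ^ ((1 : ℝ) / 3) := by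
  classical
  have hiu : ∀ i : Fin n, u i ≠ u (i + 1) := fun i h => fin_ne_succ hn i (hu h)
  have hmem : ∀ (x : Fin N) (i : Fin n),
      x ∈ ({u i, u (i + 1), w i} : Finset (Fin N)) ↔ x = u i ∨ x = u (i + 1) ∨ x = w i := by
    intro x i; simp
  have hedgeinj : Function.Injective (fun i : Fin n => ({u i, u (i + 1), w i} : Finset (Fin N))) := by
    intro i j h
    have h' : ({u i, u (i + 1), w i} : Finset (Fin N)) = {u j, u (j + 1), w j} := h
    have hwi : w i ∈ ({u j, u (j + 1), w j} : Finset (Fin N)) := by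
      rw [← h']; simp
    rcases (hmem _ _).mp hwi with h1 | h1 | h1
    · exact absurd h1.symm (huw j i)
    · exact absurd h1.symm (huw (j + 1) i)
    · exact hw h1
  have hprod : ∀ (g : Fin N → ℝ) (i : Fin n),
      ∏ v ∈ ({u i, u (i + 1), w i} : Finset (Fin N)), g v = g (u i) * g (u (i + 1)) * g (w i) := by
    intro g i
    have h1 : u i ∉ ({u (i + 1), w i} : Finset (Fin N)) := by
      simp only [mem_insert, mem_singleton]
      push_neg
      exact ⟨hiu i, huw i i⟩
    have h2 : u (i + 1) ∉ ({w i} : Finset (Fin N)) := by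
      simp only [mem_singleton]; exact huw (i + 1) i
    rw [show ({u i, u (i + 1), w i} : Finset (Fin N))
        = insert (u i) (insert (u (i + 1)) {w i}) from rfl,
      Finset.prod_insert h1, Finset.prod_insert h2, Finset.prod_singleton, mul_assoc]
  have hsumE : ∀ g : Finset (Fin N) → ℝ,
      ∑ f ∈ E, g f = ∑ i : Fin n, g ({u i, u (i + 1), w i} : Finset (Fin N)) := by
    intro g; rw [hE]
    exact Finset.sum_image (fun i _ j _ h => hedgeinj h)
  -- B values
  have hBw : ∀ i : Fin n, (if w i ∈ Finset.image w Finset.univ then (1:ℝ) else 1/2) = 1 := by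
    intro i; simp
  have hBu : ∀ i : Fin n, (if u i ∈ Finset.image w Finset.univ then (1:ℝ) else 1/2) = 1/2 := by
    intro i
    rw [if_neg]
    simp only [Finset.mem_image, Finset.mem_univ, true_and, not_exists]
    exact fun j h => huw i j h.symm
  -- filter cardinalities
  have hcard : ∀ x : Fin N, (E.filter (fun f => x ∈ f)).card
      = (Finset.univ.filter (fun i : Fin n => x ∈ ({u i, u (i + 1), w i} : Finset (Fin N)))).card := by
    intro x
    rw [hE, Finset.filter_image, Finset.card_image_of_injective _ hedgeinj]
  have hfw : ∀ j : Fin n, Finset.univ.filter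
      (fun i : Fin n => w j ∈ ({u i, u (i + 1), w i} : Finset (Fin N))) = {j} := by
    intro j; ext i
    simp only [Finset.mem_filter, Finset.mem_univ, true_and, Finset.mem_singleton, hmem]
    constructor
    · rintro (h | h | h)
      · exact absurd h.symm (huw i j)
      · exact absurd h.symm (huw (i + 1) j)
      · exact (hw h).symm
    · rintro rfl; exact Or.inr (Or.inr rfl)
  have hfu : ∀ j : Fin n, Finset.univ.filter
      (fun i : Fin n => u j ∈ ({u i, u (i + 1), w i} : Finset (Fin N))) = {j, j - 1} := by
    intro j; ext i
    simp only [Finset.mem_filter, Finset.mem_univ, true_and, Finset.mem_insert,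
      Finset.mem_singleton, hmem]
    constructor
    · rintro (h | h | h)
      · exact Or.inl (hu h).symm
      · exact Or.inr (eq_sub_iff_add_eq.mpr (hu h).symm)
      · exact absurd h (huw j i)
    · rintro (rfl | rfl)
      · exact Or.inl rfl
      · right; left; rw [sub_add_cancel]
  have hsum_const : ∀ x : Fin N, ∑ f ∈ E.filter (fun f => x ∈ f),
        (if x ∈ Finset.image w Finset.univ then (1:ℝ) else 1/2)
      = ((Finset.univ.filter (fun i : Fin n => x ∈ ({u i, u (i + 1), w i} : Finset (Fin N)))).card : ℝ)
        * (if x ∈ Finset.image w Finset.univ then (1:ℝ) else 1/2) := by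
    intro x
    rw [Finset.sum_const, hcard x, nsmul_eq_mul]
  have hwc : ∀ j : Fin n, ∑ f ∈ E.filter (fun f => w j ∈ f),
      (if w j ∈ Finset.image w Finset.univ then (1:ℝ) else 1/2) = 1 := by
    intro j
    rw [hsum_const, hfw j, hBw j, Finset.card_singleton]
    norm_num
  have huc : ∀ j : Fin n, ∑ f ∈ E.filter (fun f => u j ∈ f),
      (if u j ∈ Finset.image w Finset.univ then (1:ℝ) else 1/2) = 1 := by
    intro j
    have hc2 : ({j, j - 1} : Finset (Fin n)).card = 2 := by
      rw [Finset.card_insert_of_notMem (by simpa using fin_ne_sub_one hn j),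
        Finset.card_singleton]
    rw [hsum_const, hfu j, hBu j, hc2]
    norm_num
  have part1 : ∀ x : Fin N, ∑ f ∈ E.filter (fun f => x ∈ f),
      (if x ∈ Finset.image w Finset.univ then (1 : ℝ) else 1/2) = 1 := by
    intro x
    obtain ⟨f, hf, hxf⟩ := hcov x
    rw [hE] at hf
    obtain ⟨i, -, rfl⟩ := Finset.mem_image.mp hf
    rcases (hmem x i).mp hxf with rfl | rfl | rfl
    · exact huc i
    · exact huc (i + 1)
    · exact hwc i
  have part2 : ∀ f ∈ E, ∏ x ∈ f,
      (if x ∈ Finset.image w Finset.univ then (1 : ℝ) else 1/2) = 1/4 := by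
    intro f hf
    rw [hE] at hf
    obtain ⟨i, -, rfl⟩ := Finset.mem_image.mp hf
    rw [hprod, hBu i, hBu (i + 1), hBw i]
    norm_num
  -- part 3
  have hvert : ∀ x : Fin N, (∃ i, x = u i) ∨ (∃ i, x = w i) := by
    intro x
    obtain ⟨f, hf, hxf⟩ := hcov x
    rw [hE] at hf
    obtain ⟨i, -, rfl⟩ := Finset.mem_image.mp hf
    rcases (hmem x i).mp hxf with h | h | h
    · exact Or.inl ⟨i, h⟩
    · exact Or.inl ⟨i + 1, h⟩
    · exact Or.inr ⟨i, h⟩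
  have hdisj : Disjoint (Finset.image u Finset.univ) (Finset.image w Finset.univ) := by
    rw [Finset.disjoint_left]
    intro a ha hb
    simp only [Finset.mem_image, Finset.mem_univ, true_and] at ha hb
    obtain ⟨i, rfl⟩ := ha
    obtain ⟨j, hj⟩ := hb
    exact huw i j hj.symm
  have huniv : (Finset.univ : Finset (Fin N))
      = Finset.image u Finset.univ ∪ Finset.image w Finset.univ := by
    ext x
    simp only [Finset.mem_univ, true_iff, Finset.mem_union, Finset.mem_image, true_and]
    rcases hvert x with ⟨i, rfl⟩ | ⟨i, rfl⟩
    · exact Or.inl ⟨i, rfl⟩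
    · exact Or.inr ⟨i, rfl⟩
  have hsumV : ∀ g : Fin N → ℝ, ∑ v, g v = ∑ i : Fin n, g (u i) + ∑ i : Fin n, g (w i) := by
    intro g
    rw [huniv, Finset.sum_union hdisj,
      Finset.sum_image (fun i _ j _ h => hu h), Finset.sum_image (fun i _ j _ h => hw h)]
  have hshift : ∀ g : Fin N → ℝ, ∑ i : Fin n, g (u (i + 1)) = ∑ i : Fin n, g (u i) :=
    fun g => Fintype.sum_equiv (Equiv.addRight (1 : Fin n)) _ _ (fun i => rfl)
  have ht0 : (0:ℝ) < (4:ℝ) ^ ((1:ℝ)/3) := Real.rpow_pos_of_pos (by norm_num) _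
  have hfact : (Nat.factorial 3 : ℝ) = 6 := by norm_num [Nat.factorial]
  have hub : ∀ ρ ∈ {ρ : ℝ | ∃ x : Fin N → ℝ, (∀ v, 0 ≤ x v) ∧ x ≠ 0 ∧
      ρ = (Nat.factorial 3 : ℝ) * (∑ e ∈ E, ∏ v ∈ e, x v) / (∑ v, x v ^ 3)},
      ρ ≤ 2 * (4:ℝ) ^ ((1:ℝ)/3) := by
    rintro ρ ⟨x, hx0, hxne, rfl⟩
    have hT0 : 0 < ∑ v, x v ^ 3 := by
      obtain ⟨v0, hv0⟩ : ∃ v, x v ≠ 0 := by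
        by_contra h; push_neg at h; exact hxne (funext h)
      refine Finset.sum_pos' (fun v _ => pow_nonneg (hx0 v) 3) ⟨v0, Finset.mem_univ _, ?_⟩
      have : 0 < x v0 := lt_of_le_of_ne (hx0 v0) (Ne.symm hv0)
      positivity
    have hS : ∑ e ∈ E, ∏ v ∈ e, x v ≤ (4:ℝ) ^ ((1:ℝ)/3) / 3 * ∑ v, x v ^ 3 := by
      rw [hsumE (fun f => ∏ v ∈ f, x v)]
      calc ∑ i : Fin n, ∏ v ∈ ({u i, u (i + 1), w i} : Finset (Fin N)), x v
          = ∑ i : Fin n, x (u i) * x (u (i + 1)) * x (w i) :=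
            Finset.sum_congr rfl (fun i _ => hprod x i)
        _ ≤ ∑ i : Fin n, (4:ℝ) ^ ((1:ℝ)/3) / 3
            * (x (u i) ^ 3 / 2 + x (u (i + 1)) ^ 3 / 2 + x (w i) ^ 3) :=
            Finset.sum_le_sum (fun i _ => key_ineq _ _ _ (hx0 _) (hx0 _) (hx0 _))
        _ = (4:ℝ) ^ ((1:ℝ)/3) / 3 * (∑ i : Fin n, x (u i) ^ 3 / 2
            + ∑ i : Fin n, x (u (i + 1)) ^ 3 / 2 + ∑ i : Fin n, x (w i) ^ 3) := by
            rw [← Finset.mul_sum, Finset.sum_add_distrib, Finset.sum_add_distrib]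
        _ = (4:ℝ) ^ ((1:ℝ)/3) / 3 * (∑ i : Fin n, x (u i) ^ 3 + ∑ i : Fin n, x (w i) ^ 3) := by
            rw [hshift (fun v => x v ^ 3 / 2),
              show ∑ i : Fin n, x (u i) ^ 3 / 2 = (∑ i : Fin n, x (u i) ^ 3) / 2
                from (Finset.sum_div _ _ _).symm]
            ring
        _ = (4:ℝ) ^ ((1:ℝ)/3) / 3 * ∑ v, x v ^ 3 := by
            rw [hsumV (fun v => x v ^ 3)]
    rw [hfact, div_le_iff₀ hT0]
    nlinarith [hS, ht0.le, hT0.le]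
  have hnR : (0:ℝ) < (n : ℝ) := by
    have := Nat.pos_of_ne_zero (NeZero.ne n)
    exact_mod_cast this
  have hc0 : (0:ℝ) < (2:ℝ) ^ ((1:ℝ)/3) := Real.rpow_pos_of_pos (by norm_num) _
  have hmem2t : (2 * (4:ℝ) ^ ((1:ℝ)/3)) ∈ {ρ : ℝ | ∃ x : Fin N → ℝ, (∀ v, 0 ≤ x v) ∧ x ≠ 0 ∧
      ρ = (Nat.factorial 3 : ℝ) * (∑ e ∈ E, ∏ v ∈ e, x v) / (∑ v, x v ^ 3)} := by
    set c : ℝ := (2:ℝ) ^ ((1:ℝ)/3) with hcdef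
    refine ⟨fun v => if v ∈ Finset.image w Finset.univ then 1 else c, fun v => ?_, ?_, ?_⟩
    · by_cases h : v ∈ Finset.image w Finset.univ <;> simp [h, hc0.le]
    · intro h
      have h3 : u (0 : Fin n) ∉ Finset.image w Finset.univ := by
        simp only [Finset.mem_image, Finset.mem_univ, true_and, not_exists]
        exact fun j hj => huw 0 j hj.symm
      have h2 : (if u (0 : Fin n) ∈ Finset.image w Finset.univ then (1:ℝ) else c) = 0 :=
        congrFun h (u (0 : Fin n))
      rw [if_neg h3] at h2
      exact hc0.ne' h2
    · have hx0u : ∀ i : Fin n, (if u i ∈ Finset.image w Finset.univ then (1:ℝ) else c) = c := by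
        intro i
        rw [if_neg]
        simp only [Finset.mem_image, Finset.mem_univ, true_and, not_exists]
        exact fun j hj => huw i j hj.symm
      have hx0w : ∀ i : Fin n, (if w i ∈ Finset.image w Finset.univ then (1:ℝ) else c) = 1 := by
        intro i; rw [if_pos]; exact Finset.mem_image_of_mem w (Finset.mem_univ i)
      have hS0 : ∑ e ∈ E, ∏ v ∈ e, (if v ∈ Finset.image w Finset.univ then (1:ℝ) else c)
          = n * c ^ 2 := by
        rw [hsumE (fun f => ∏ v ∈ f, (if v ∈ Finset.image w Finset.univ then (1:ℝ) else c))]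
        have heach : ∀ i : Fin n, ∏ v ∈ ({u i, u (i + 1), w i} : Finset (Fin N)),
            (if v ∈ Finset.image w Finset.univ then (1:ℝ) else c) = c ^ 2 := by
          intro i
          rw [hprod, hx0u i, hx0u (i + 1), hx0w i]
          ring
        rw [Finset.sum_congr rfl (fun i _ => heach i), Finset.sum_const, Finset.card_univ,
          Fintype.card_fin, nsmul_eq_mul]
      have hT0 : ∑ v, (if v ∈ Finset.image w Finset.univ then (1:ℝ) else c) ^ 3
          = 3 * n := by
        rw [hsumV (fun v => (if v ∈ Finset.image w Finset.univ then (1:ℝ) else c) ^ 3)]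
        have h1 : ∀ i : Fin n,
            (if u i ∈ Finset.image w Finset.univ then (1:ℝ) else c) ^ 3 = 2 := by
          intro i; rw [hx0u i, hcdef, cube_c]
        have h2 : ∀ i : Fin n,
            (if w i ∈ Finset.image w Finset.univ then (1:ℝ) else c) ^ 3 = 1 := by
          intro i; rw [hx0w i]; norm_num
        rw [Finset.sum_congr rfl (fun i _ => h1 i), Finset.sum_congr rfl (fun i _ => h2 i),
          Finset.sum_const, Finset.sum_const, Finset.card_univ, Fintype.card_fin,
          nsmul_eq_mul, nsmul_eq_mul]
        ring
      rw [hS0, hT0, hfact, show (4:ℝ) ^ ((1:ℝ)/3) = c ^ 2 from t_eq_sq]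
      field_simp
      ring
  refine ⟨part1, part2, ?_⟩
  unfold specRad
  refine le_antisymm (Real.sSup_le hub (by positivity)) (le_csSup ⟨_, hub⟩ hmem2t)
end

section
/- If an r-uniform hypergraph H has an edge e containing exactly two non-leaf vertices u, v such that H−e is disconnected (a 2-bridge), and the contraction H/e (delete e, identify u and v) satisfies ρ(H/e) > (r−1)!·4^{1/r}, then ρ(H) > (r−1)!·4^{1/r}. -/
open Finset

/-!
Take a nonnegative `x` on `H/e` whose Rayleigh quotient exceeds `c = (r-1)!·4^{1/r}`. Split the
merged vertex back into `u₀` and `v₀`, both carrying `x u₀`, and give the `r - 2` leaves of `e`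
the weight `x u₀ · t` with `t ^ r = 1/2`. Since `e` is a bridge, the edges of `H - e` correspond
bijectively to those of `H/e` with the same products, and the extra terms that `e` and the doubled
vertex add to numerator and denominator stand exactly in the ratio `c`, so the Rayleigh quotient of
the new vector on `H` still exceeds `c`.
-/

open Nat

section SpectralRadius

variable {V : Type} [Fintype V] {r : ℕ} {E : Finset (Finset V)}

lemma prod_le_sum_pow_card {f : Finset V} (hf : f.Nonempty) {x : V → ℝ} (hx : ∀ v, 0 ≤ x v) :
    ∏ v ∈ f, x v ≤ ∑ v, x v ^ f.card := by
  obtain ⟨m, -, hm⟩ := f.exists_max_image x hf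
  calc ∏ v ∈ f, x v ≤ ∏ _v ∈ f, x m := prod_le_prod (fun v _ => hx v) hm
    _ = x m ^ f.card := prod_const _
    _ ≤ ∑ v, x v ^ f.card := single_le_sum (fun v _ => pow_nonneg (hx v) _) (mem_univ m)

lemma rayleigh_le_specRad (hunif : ∀ f ∈ E, f.card = r) (hr : 1 ≤ r) {x : V → ℝ}
    (hx : ∀ v, 0 ≤ x v) (hx0 : x ≠ 0) :
    r ! * (∑ f ∈ E, ∏ v ∈ f, x v) / ∑ v, x v ^ r ≤ specRad r E := by
  refine le_csSup ⟨r ! * E.card, ?_⟩ ⟨x, hx, hx0, rfl⟩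
  rintro _ ⟨y, hy, -, rfl⟩
  refine div_le_of_le_mul₀ (sum_nonneg fun v _ => pow_nonneg (hy v) r) (by positivity) ?_
  rw [mul_assoc]
  gcongr
  calc ∑ f ∈ E, ∏ v ∈ f, y v ≤ ∑ _f ∈ E, ∑ v, y v ^ r := sum_le_sum fun f hf => by
        have hf' := prod_le_sum_pow_card (card_pos.1 (by rw [hunif f hf]; omega)) hy
        rwa [hunif f hf] at hf'
    _ = E.card * ∑ v, y v ^ r := by rw [sum_const, nsmul_eq_mul]

lemma lt_specRad_of_mul_lt (hunif : ∀ f ∈ E, f.card = r) (hr : 1 ≤ r) {c : ℝ}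
    {x : V → ℝ} (hx : ∀ v, 0 ≤ x v) (h : c * ∑ v, x v ^ r < r ! * ∑ f ∈ E, ∏ v ∈ f, x v) :
    c < specRad r E := by
  have hx0 : x ≠ 0 := by
    rintro rfl
    have hN : ∑ f ∈ E, ∏ v ∈ f, (0 : V → ℝ) v = 0 :=
      sum_eq_zero fun f hf => by simp [hunif f hf, zero_pow (by omega : r ≠ 0)]
    rw [hN] at h
    simp [zero_pow (by omega : r ≠ 0)] at h
  obtain ⟨w, hw⟩ := Function.ne_iff.1 hx0
  have hD : 0 < ∑ v, x v ^ r :=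
    (pow_pos ((hx w).lt_of_ne' hw) r).trans_le
      (single_le_sum (fun v _ => pow_nonneg (hx v) r) (mem_univ w))
  exact ((lt_div_iff₀ hD).2 (by linarith)).trans_le (rayleigh_le_specRad hunif hr hx hx0)

lemma exists_mul_lt_of_lt_specRad {c : ℝ} (hc : 0 ≤ c) (h : c < specRad r E) :
    ∃ x : V → ℝ, (∀ v, 0 ≤ x v) ∧ c * ∑ v, x v ^ r < r ! * ∑ f ∈ E, ∏ v ∈ f, x v := by
  by_contra! hle
  refine h.not_ge (Real.sSup_le ?_ hc)
  rintro _ ⟨x, hx, -, rfl⟩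
  exact div_le_of_le_mul₀ (sum_nonneg fun v _ => pow_nonneg (hx v) r) hc (hle x hx)

end SpectralRadius

section Contraction

variable {V : Type} [DecidableEq V] {F : Finset (Finset V)}

lemma reflTransGen_step_of_sdiff_subset {p q : V} {f g : Finset V} (hf : f ∈ F) (hg : g ∈ F)
    (hcard : 2 ≤ f.card) (hp : p ∈ f) (hqf : q ∉ f) (hq : q ∈ g) (hfg : f \ {p, q} ⊆ g) :
    Relation.ReflTransGen (Step F) p q := by
  obtain ⟨z, hz, hzp⟩ := exists_mem_ne hcard p
  have hzq : z ≠ q := fun h => hqf (h ▸ hz)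
  exact .head ⟨f, hf, hp, hz⟩ (.single ⟨g, hg, hfg (by simp [hz, hzp, hzq]), hq⟩)

variable {u₀ v₀ : V}

def mergeVertex (u₀ v₀ w : V) : V := if w = v₀ then u₀ else w

lemma mergeVertex_self : mergeVertex u₀ v₀ v₀ = u₀ := if_pos rfl

lemma mergeVertex_of_ne {w : V} (hw : w ≠ v₀) : mergeVertex u₀ v₀ w = w := if_neg hw

lemma mergeVertex_injOn {f : Finset V} (hf : ¬ (u₀ ∈ f ∧ v₀ ∈ f)) :
    Set.InjOn (mergeVertex u₀ v₀) f := by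
  intro a ha b hb hab
  unfold mergeVertex at hab
  split_ifs at hab with hav hbv hbv <;> grind

lemma sdiff_subset_of_image_mergeVertex_eq {f g : Finset V}
    (h : f.image (mergeVertex u₀ v₀) = g.image (mergeVertex u₀ v₀)) : f \ {u₀, v₀} ⊆ g := by
  intro z hz
  obtain ⟨hz, hzuv⟩ := mem_sdiff.1 hz
  obtain ⟨hzu, hzv⟩ : z ≠ u₀ ∧ z ≠ v₀ := by simpa [not_or] using hzuv
  have : z ∈ g.image (mergeVertex u₀ v₀) := h ▸ mem_image.2 ⟨z, hz, mergeVertex_of_ne hzv⟩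
  obtain ⟨w, hw, hwz⟩ := mem_image.1 this
  unfold mergeVertex at hwz
  split_ifs at hwz with hwv
  · exact absurd hwz.symm hzu
  · exact hwz ▸ hw

lemma injOn_image_mergeVertex (hbridge : ¬ Relation.ReflTransGen (Step F) u₀ v₀)
    (hcard : ∀ f ∈ F, 2 ≤ f.card) : Set.InjOn (image (mergeVertex u₀ v₀)) F := by
  suffices key : ∀ f ∈ F, ∀ g ∈ F,
      f.image (mergeVertex u₀ v₀) = g.image (mergeVertex u₀ v₀) → f ⊆ g from
    fun f hf g hg h => (key f hf g hg h).antisymm (key g hg f hf h.symm)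
  intro f hf g hg h w hw
  by_contra hwg
  obtain ⟨w', hw', hww'⟩ := mem_image.1 (h ▸ mem_image_of_mem (mergeVertex u₀ v₀) hw)
  unfold mergeVertex at hww'
  split_ifs at hww' with hw'v hwv hwv
  · exact hwg (by rwa [hwv, ← hw'v])
  · subst hw'v hww'
    exact hbridge (reflTransGen_step_of_sdiff_subset hf hg (hcard f hf) hw
      (fun hv => hbridge (.single ⟨f, hf, hw, hv⟩)) hw' (sdiff_subset_of_image_mergeVertex_eq h))
  · subst hwv hww'
    exact hbridge (reflTransGen_step_of_sdiff_subset hg hf (hcard g hg) hw' hwg hw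
      (sdiff_subset_of_image_mergeVertex_eq h.symm))
  · exact hwg (hww' ▸ hw')

lemma sum_prod_image_mergeVertex (hbridge : ¬ Relation.ReflTransGen (Step F) u₀ v₀)
    (hcard : ∀ f ∈ F, 2 ≤ f.card) (x : V → ℝ) :
    ∑ f ∈ F.image (image (mergeVertex u₀ v₀)), ∏ v ∈ f, x v =
      ∑ f ∈ F, ∏ v ∈ f, x (mergeVertex u₀ v₀ v) := by
  rw [sum_image (injOn_image_mergeVertex hbridge hcard)]
  refine sum_congr rfl fun f hf => prod_image (mergeVertex_injOn fun huv => ?_)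
  exact hbridge (.single ⟨f, hf, huv⟩)

lemma sum_comp_mergeVertex_add [Fintype V] {M : Type} [AddCommMonoid M] (g : V → M) :
    ∑ v, g (mergeVertex u₀ v₀ v) + g v₀ = ∑ v, g v + g u₀ := by
  rw [← add_sum_erase univ _ (mem_univ v₀), ← add_sum_erase univ g (mem_univ v₀),
    sum_congr rfl fun v hv => by rw [mergeVertex_of_ne (ne_of_mem_erase hv)], mergeVertex_self]
  ac_rfl

end Contraction

lemma pow_sub_two_eq_four_rpow_div_two {r : ℕ} (hr : 2 ≤ r) {t : ℝ} (ht0 : 0 ≤ t)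
    (ht : t ^ r = 1 / 2) : t ^ (r - 2) = (4 : ℝ) ^ ((1 : ℝ) / r) / 2 := by
  have ht2 : (4 : ℝ) ^ ((1 : ℝ) / r) = (t ^ 2)⁻¹ := by
    have h4 : (4 : ℝ) = ((t ^ 2)⁻¹) ^ r := by
      rw [inv_pow, ← pow_mul, mul_comm, pow_mul, ht]; norm_num
    rw [one_div, h4, Real.pow_rpow_inv_natCast (by positivity) (by omega)]
  have hsplit : t ^ (r - 2) * t ^ 2 = 1 / 2 := by rw [← pow_add, Nat.sub_add_cancel hr, ht]
  have htpos : 0 < t := ht0.lt_of_ne (by rintro rfl; simp [zero_pow (by omega : r ≠ 0)] at ht)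
  rw [ht2]
  field_simp
  linarith

/- `t ^ r = 1 / 2` maximises `r! t ^ (r - 2) / (1 + (r - 2) t ^ r)`, the ratio of what the edge
`e` with leaf weights `a t` adds to the numerator and to the denominator of the Rayleigh quotient;
the maximum is `(r - 1)! 4 ^ (1 / r)`, which is where the threshold comes from. -/
lemma pred_factorial_mul_four_rpow_mul_eq {r : ℕ} (hr : 2 ≤ r) {t : ℝ} (ht0 : 0 ≤ t)
    (ht : t ^ r = 1 / 2) (a : ℝ) :
    (r - 1)! * (4 : ℝ) ^ ((1 : ℝ) / r) * (a ^ r + (r - 2 : ℕ) * (a * t) ^ r) =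
      r ! * (a * a * (a * t) ^ (r - 2)) := by
  have h4 : (4 : ℝ) ^ ((1 : ℝ) / r) = 2 * t ^ (r - 2) := by
    rw [pow_sub_two_eq_four_rpow_div_two hr ht0 ht]; ring
  rw [h4, mul_pow, mul_pow, ht]
  obtain ⟨k, rfl⟩ : ∃ k, r = k + 2 := ⟨r - 2, by omega⟩
  simp only [Nat.add_sub_cancel, show k + 2 - 1 = k + 1 by omega, Nat.factorial_succ]
  push_cast
  ring

lemma sum_pow_ite_mem_le {V : Type} [Fintype V] [DecidableEq V] (L : Finset V) (s : ℝ)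
    {g : V → ℝ} (hg : ∀ v, 0 ≤ g v) (r : ℕ) :
    ∑ v, (if v ∈ L then s else g v) ^ r ≤ L.card * s ^ r + ∑ v, g v ^ r := by
  calc ∑ v, (if v ∈ L then s else g v) ^ r ≤ ∑ v, ((if v ∈ L then s ^ r else 0) + g v ^ r) :=
        sum_le_sum fun v _ => by split_ifs <;> simp [pow_nonneg (hg v)]
    _ = L.card * s ^ r + ∑ v, g v ^ r := by
        rw [sum_add_distrib, sum_ite_mem, univ_inter, sum_const, nsmul_eq_mul]

lemma notMem_of_card_filter_mem_eq_one {V : Type} [DecidableEq V] {E : Finset (Finset V)}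
    {e f : Finset V} {w : V} (he : e ∈ E) (hw : w ∈ e) (h : (E.filter (fun f => w ∈ f)).card = 1)
    (hf : f ∈ E.erase e) : w ∉ f := fun hwf =>
  ne_of_mem_erase hf <| card_le_one.1 h.le f (mem_filter.2 ⟨mem_of_mem_erase hf, hwf⟩) e
    (mem_filter.2 ⟨he, hw⟩)

lemma card_erase_erase {V : Type} [DecidableEq V] {e : Finset V} {u₀ v₀ : V} (hu : u₀ ∈ e)
    (hv : v₀ ∈ e) (hne : u₀ ≠ v₀) : ((e.erase u₀).erase v₀).card = e.card - 2 := by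
  rw [card_erase_of_mem (mem_erase.2 ⟨hne.symm, hv⟩), card_erase_of_mem hu]; omega

lemma sum_prod_ite_leaves_eq {V : Type} [DecidableEq V] {r : ℕ} (hr : 2 ≤ r)
    {E : Finset (Finset V)} (hunif : ∀ f ∈ E, f.card = r) {e : Finset V} (he : e ∈ E)
    {u₀ v₀ : V} (hu : u₀ ∈ e) (hv : v₀ ∈ e) (hne : u₀ ≠ v₀)
    (hleaf : ∀ w ∈ e, w ≠ u₀ → w ≠ v₀ → (E.filter (fun f => w ∈ f)).card = 1)
    (hbridge : ¬ Relation.ReflTransGen (Step (E.erase e)) u₀ v₀) (x : V → ℝ) (s : ℝ) :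
    ∑ f ∈ E, ∏ v ∈ f, (if v ∈ (e.erase u₀).erase v₀ then s else x (mergeVertex u₀ v₀ v)) =
      x u₀ * x u₀ * s ^ (r - 2) +
        ∑ f ∈ (E.erase e).image (image (mergeVertex u₀ v₀)), ∏ v ∈ f, x v := by
  have hcard : ∀ f ∈ E.erase e, 2 ≤ f.card := fun f hf => hunif f (mem_of_mem_erase hf) ▸ hr
  have hve : v₀ ∈ e.erase u₀ := mem_erase.2 ⟨hne.symm, hv⟩
  rw [← add_sum_erase E _ he, sum_prod_image_mergeVertex hbridge hcard x,
    ← mul_prod_erase e _ hu, ← mul_prod_erase _ _ hve]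
  congr 1
  · rw [prod_congr rfl fun v hv => if_pos hv, prod_const, card_erase_erase hu hv hne, hunif e he,
      mergeVertex_of_ne hne, mergeVertex_self, if_neg (by simp), if_neg (by simp), mul_assoc]
  · refine sum_congr rfl fun f hf => prod_congr rfl fun v hvf => if_neg fun hvL => ?_
    obtain ⟨hvv, hvu, hve⟩ : v ≠ v₀ ∧ v ≠ u₀ ∧ v ∈ e := by simpa using hvL
    exact notMem_of_card_filter_mem_eq_one he hve (hleaf v hve hvu hvv) hf hvf

theorem specRad_gt_of_contraction_gt_general {V : Type} [Fintype V] [DecidableEq V]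
    (r : ℕ) (hr : 2 ≤ r) (E : Finset (Finset V)) (hunif : ∀ f ∈ E, f.card = r)
    (e : Finset V) (he : e ∈ E) (u₀ v₀ : V) (hu : u₀ ∈ e) (hv : v₀ ∈ e)
    (hne : u₀ ≠ v₀)
    (hleaf : ∀ w ∈ e, w ≠ u₀ → w ≠ v₀ → (E.filter (fun f => w ∈ f)).card = 1)
    (hbridge : ¬ Relation.ReflTransGen (Step (E.erase e)) u₀ v₀)
    (hcontr : (Nat.factorial (r - 1) : ℝ) * (4 : ℝ) ^ ((1 : ℝ) / r) <
      specRad r ((E.erase e).image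
        (fun f => f.image (fun x => if x = v₀ then u₀ else x)))) :
    (Nat.factorial (r - 1) : ℝ) * (4 : ℝ) ^ ((1 : ℝ) / r) < specRad r E := by
  set c := ((r - 1)! : ℝ) * (4 : ℝ) ^ ((1 : ℝ) / r)
  have hc : 0 ≤ c := by positivity
  obtain ⟨x, hx, hxc⟩ := exists_mul_lt_of_lt_specRad (E :=
    (E.erase e).image (image (mergeVertex u₀ v₀))) hc hcontr
  obtain ⟨t, ht0, ht⟩ : ∃ t : ℝ, 0 ≤ t ∧ t ^ r = 1 / 2 :=
    ⟨_, by positivity, Real.rpow_inv_natCast_pow (by norm_num) (by omega)⟩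
  set L := (e.erase u₀).erase v₀
  have hL : L.card = r - 2 := by rw [card_erase_erase hu hv hne, hunif e he]
  refine lt_specRad_of_mul_lt hunif (by omega)
    (x := fun v => if v ∈ L then x u₀ * t else x (mergeVertex u₀ v₀ v))
    (fun v => by split_ifs; exacts [mul_nonneg (hx u₀) ht0, hx _]) ?_
  rw [sum_prod_ite_leaves_eq hr hunif he hu hv hne hleaf hbridge]
  have hden := sum_pow_ite_mem_le L (x u₀ * t) (fun v => hx (mergeVertex u₀ v₀ v)) r
  have hmerge := sum_comp_mergeVertex_add (u₀ := u₀) (v₀ := v₀) fun v => x v ^ r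
  calc c * ∑ v, (if v ∈ L then x u₀ * t else x (mergeVertex u₀ v₀ v)) ^ r
      ≤ c * (∑ v, x v ^ r + (x u₀ ^ r + (r - 2 : ℕ) * (x u₀ * t) ^ r)) := by
        rw [hL] at hden
        gcongr
        linarith [pow_nonneg (hx v₀) r]
    _ < r ! * (x u₀ * x u₀ * (x u₀ * t) ^ (r - 2) +
          ∑ f ∈ (E.erase e).image (image (mergeVertex u₀ v₀)), ∏ v ∈ f, x v) := by
        rw [mul_add, pred_factorial_mul_four_rpow_mul_eq hr ht0 ht, mul_add]
        linarith

/-- if `e` is a 2-bridge of `H` with non-leaf vertices `u₀, v₀`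
(all other vertices of `e` are leaves and `H − e` does not connect `u₀` to `v₀`),
and the contraction `H/e` (delete `e`, identify `v₀` with `u₀`) has spectral radius
greater than `(r−1)!·4^{1/r}`, then so does `H`. -/
theorem specRad_gt_of_contraction_gt {V : Type} [Fintype V] [DecidableEq V]
    (r : ℕ) (hr : 2 ≤ r) (E : Finset (Finset V)) (hunif : ∀ f ∈ E, f.card = r)
    (e : Finset V) (he : e ∈ E) (u₀ v₀ : V) (hu : u₀ ∈ e) (hv : v₀ ∈ e)
    (hne : u₀ ≠ v₀)
    (hdu : 2 ≤ (E.filter (fun f => u₀ ∈ f)).card)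
    (hdv : 2 ≤ (E.filter (fun f => v₀ ∈ f)).card)
    (hleaf : ∀ w ∈ e, w ≠ u₀ → w ≠ v₀ → (E.filter (fun f => w ∈ f)).card = 1)
    (hbridge : ¬ Relation.ReflTransGen (Step (E.erase e)) u₀ v₀)
    (hcontr : (Nat.factorial (r - 1) : ℝ) * (4 : ℝ) ^ ((1 : ℝ) / r) <
      specRad r ((E.erase e).image
        (fun f => f.image (fun x => if x = v₀ then u₀ else x)))) :
    (Nat.factorial (r - 1) : ℝ) * (4 : ℝ) ^ ((1 : ℝ) / r) < specRad r E :=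
  specRad_gt_of_contraction_gt_general r hr E hunif e he u₀ v₀ hu hv hne hleaf hbridge hcontr
end
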